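/- arXiv:quant-ph/0501126 — 8 statements merged into one kernel-verified Lean document; each statement's English description precedes it below -/
import Mathlib

section
/- Let q be a prime power, m ≥ 2 an integer, and n = q^m − 1. Let α be a primitive element of F_{q^m} (a generator of the multiplicative group of F_{q^m}), and for an integer δ with 2 ≤ δ ≤ n let C be the primitive, narrow-sense BCH code of designed distance δ, i.e. C = {c ∈ F_q^n : Σ_{i=0}^{n−1} c_i α^{ij} = 0 in F_{q^m} for every integer j with 1 ≤ j ≤ δ−1}. Then the Euclidean dual code C^⊥ is contained in C if and only if δ ≤ q^{⌈m/2⌉} − 1 − (q−2)·[m is odd], where [P] equals 1 if P holds and 0 otherwise. -/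
/-- Primitive, narrow-sense BCH code of designed distance `δ`: all words
`c ∈ F_q^n` such that `∑ i, c i * α ^ (i*j) = 0` for `1 ≤ j ≤ δ - 1`. -/
def bchCode (F : Type*) {E : Type*} [Field F] [Field E] [Algebra F E]
    (n : ℕ) (α : E) (δ : ℕ) : Submodule F (Fin n → F) where
  carrier := {c | ∀ j : ℕ, 1 ≤ j → j ≤ δ - 1 →
    ∑ i : Fin n, algebraMap F E (c i) * α ^ ((i : ℕ) * j) = 0}
  zero_mem' := by intro j _ _; simp
  add_mem' := by
    intro a b ha hb j h1 h2
    have hA := ha j h1 h2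
    have hB := hb j h1 h2
    simp only [Pi.add_apply, map_add, add_mul]
    rw [Finset.sum_add_distrib, hA, hB, add_zero]
  smul_mem' := by
    intro r a ha j h1 h2
    have hA := ha j h1 h2
    simp only [Pi.smul_apply, smul_eq_mul, map_mul, mul_assoc]
    rw [← Finset.mul_sum, hA, mul_zero]

/-- Euclidean dual of a set of codewords. -/
def dualSet {F : Type*} [Field F] {n : ℕ} (C : Set (Fin n → F)) : Set (Fin n → F) :=
  {y | ∀ x ∈ C, ∑ i, x i * y i = 0}

/-!
Write `n = q^m - 1`, `Tr` for the trace of `E/F` and `S_j(c) = ∑ c_i α^{ij}` for the syndromes.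
For the trace word `w_i = Tr(β α^{ij})` one has `⟨c, w⟩ = Tr(β S_j(c))`, so `w ∈ C^⊥` whenever
`1 ≤ j < δ`. Expanding `Tr x = ∑_{k<m} x^{q^k}` and summing geometric series over `α`,
`S_{j'}(w) = -∑ β^{q^k}`, the sum over those `k < m` with `n ∣ j q^k + j'`. If such a `k` exists,
this is a nonzero polynomial in `β` of degree `< q^m`, so some trace word in `C^⊥` is not in `C`.
If none exists for any `1 ≤ j, j' < δ`, all these trace words lie in `C`, so every `y ∈ C^⊥`
has `Tr(β S_j(y)) = ⟨y, w⟩ = 0` for all `β`, and `S_j(y) = 0` because the trace form is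
nondegenerate.

The remaining condition is arithmetic. Rotating by a power of `q` we may assume `k ≤ m/2`, where
`j q^k + j' < n` as long as `j, j'` stay below the bound. At the bound, with `t = ⌊m/2⌋` and
`Q = q^t`, the pairs `j = j' = Q - 1` (for `m = 2t`) and `j = qQ - q + 1`, `j' = qQ - Q - 1`
(for `m = 2t + 1`) satisfy `j Q + j' = n`.
-/

open Finset Polynomial

/-- Some `-j'` lies in the `q`-cyclotomic coset of some `j` modulo `q^m - 1`. -/
def HasNegCosetPair (q m δ : ℕ) : Prop :=
  ∃ j j' k, 1 ≤ j ∧ j < δ ∧ 1 ≤ j' ∧ j' < δ ∧ k < m ∧ q ^ m - 1 ∣ j * q ^ k + j'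

section Arithmetic

variable {q m δ : ℕ}

lemma mul_pow_add_lt_pow_sub_one {k j j' : ℕ} (hq : 2 ≤ q) (hk : k ≤ m / 2)
    (hj : j < q ^ ((m + 1) / 2) - 1 - (q - 2) * (if Odd m then 1 else 0))
    (hj' : j' < q ^ ((m + 1) / 2) - 1 - (q - 2) * (if Odd m then 1 else 0)) :
    j * q ^ k + j' < q ^ m - 1 := by
  obtain ⟨t, rfl | rfl⟩ := Nat.even_or_odd' m
  · rw [show (2 * t + 1) / 2 = t by omega, if_neg (Nat.not_odd_iff_even.mpr (even_two_mul t)),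
      mul_zero, Nat.sub_zero] at hj hj'
    rw [Nat.mul_div_cancel_left t two_pos] at hk
    have hjk : j * q ^ k ≤ j * q ^ t := Nat.mul_le_mul_left j (Nat.pow_le_pow_right (by omega) hk)
    have hjQ : j * q ^ t + 2 * q ^ t ≤ q ^ t * q ^ t := by
      rw [← add_mul]; exact Nat.mul_le_mul_right _ (by omega)
    rw [pow_mul', sq]
    omega
  · rw [show (2 * t + 1 + 1) / 2 = t + 1 by omega, if_pos (odd_two_mul_add_one t), mul_one,
      pow_succ'] at hj hj'
    rw [show (2 * t + 1) / 2 = t by omega] at hk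
    have hjk : j * q ^ k ≤ j * q ^ t := Nat.mul_le_mul_left j (Nat.pow_le_pow_right (by omega) hk)
    have hjQ : j * q ^ t + q * q ^ t ≤ q * q ^ t * q ^ t := by
      rw [← add_mul]; exact Nat.mul_le_mul_right _ (by omega)
    have : q ≤ q * q ^ t := Nat.le_mul_of_pos_right _ (by positivity)
    rw [pow_succ', pow_mul', sq, ← mul_assoc]
    omega

lemma dvd_mul_pow_sub_add_of_dvd {k j j' : ℕ} (hq : 0 < q) (hk : k ≤ m)
    (h : q ^ m - 1 ∣ j * q ^ k + j') : q ^ m - 1 ∣ j' * q ^ (m - k) + j := by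
  have hqm : 1 ≡ q ^ m [MOD q ^ m - 1] :=
    (Nat.modEq_iff_dvd' (Nat.one_le_pow _ _ hq)).mpr dvd_rfl
  rw [← Nat.modEq_zero_iff_dvd] at h ⊢
  calc j' * q ^ (m - k) + j ≡ j' * q ^ (m - k) + j * q ^ m [MOD q ^ m - 1] := by
        simpa using (hqm.mul_left j).add_left (j' * q ^ (m - k))
    _ = (j * q ^ k + j') * q ^ (m - k) := by
        rw [← Nat.add_sub_cancel' hk, pow_add, Nat.add_sub_cancel_left]; ring
    _ ≡ 0 * q ^ (m - k) [MOD q ^ m - 1] := h.mul_right _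
    _ = 0 := zero_mul _

lemma not_hasNegCosetPair_of_le (hq : 2 ≤ q)
    (hδ : δ ≤ q ^ ((m + 1) / 2) - 1 - (q - 2) * (if Odd m then 1 else 0)) :
    ¬ HasNegCosetPair q m δ := by
  rintro ⟨j, j', k, hj1, hj, hj'1, hj', hk, hdvd⟩
  wlog hkm : k ≤ m / 2 generalizing j j' k
  · exact this j' j (m - k) hj'1 hj' hj1 hj (by omega)
      (dvd_mul_pow_sub_add_of_dvd (by omega) hk.le hdvd) (by omega)
  have := Nat.le_of_dvd (by positivity) hdvd
  have := mul_pow_add_lt_pow_sub_one hq hkm (hj.trans_le hδ) (hj'.trans_le hδ)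
  omega

lemma hasNegCosetPair_of_lt (hq : 2 ≤ q) (hm : 2 ≤ m)
    (hδ : q ^ ((m + 1) / 2) - 1 - (q - 2) * (if Odd m then 1 else 0) < δ) :
    HasNegCosetPair q m δ := by
  obtain ⟨t, rfl | rfl⟩ := Nat.even_or_odd' m
  · rw [show (2 * t + 1) / 2 = t by omega, if_neg (Nat.not_odd_iff_even.mpr (even_two_mul t)),
      mul_zero, Nat.sub_zero] at hδ
    have hQ : q ≤ q ^ t := Nat.le_self_pow (by omega) q
    have : 1 ≤ q ^ t * q ^ t := Nat.one_le_iff_ne_zero.mpr (by positivity)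
    refine ⟨q ^ t - 1, q ^ t - 1, t, by omega, by omega, by omega, by omega, by omega,
      dvd_of_eq ?_⟩
    rw [pow_mul', sq]
    zify [this, show 1 ≤ q ^ t by omega]
    ring
  · rw [show (2 * t + 1 + 1) / 2 = t + 1 by omega, if_pos (odd_two_mul_add_one t), mul_one,
      pow_succ'] at hδ
    have hQ : q ≤ q ^ t := Nat.le_self_pow (by omega) q
    have : 2 * q ^ t ≤ q * q ^ t := Nat.mul_le_mul_right _ hq
    have : 1 ≤ q * q ^ t * q ^ t := Nat.one_le_iff_ne_zero.mpr (by positivity)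
    refine ⟨q * q ^ t - q + 1, q * q ^ t - q ^ t - 1, t, by omega, by omega, by omega, by omega,
      by omega, dvd_of_eq ?_⟩
    rw [pow_succ', pow_mul', sq, ← mul_assoc]
    zify [this, show q ≤ q * q ^ t by omega, show q ^ t ≤ q * q ^ t by omega,
      show 1 ≤ q * q ^ t - q ^ t by omega]
    ring

lemma hasNegCosetPair_iff (hq : 2 ≤ q) (hm : 2 ≤ m) :
    HasNegCosetPair q m δ ↔ q ^ ((m + 1) / 2) - 1 - (q - 2) * (if Odd m then 1 else 0) < δ :=
  ⟨fun h => not_le.mp fun hδ => not_hasNegCosetPair_of_le hq hδ h, hasNegCosetPair_of_lt hq hm⟩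

end Arithmetic

lemma exists_sum_pow_pow_ne_zero {E : Type*} [Field E] [Fintype E] {q : ℕ} (hq : 2 ≤ q)
    {K : Finset ℕ} (hK : K.Nonempty) (hKE : ∀ k ∈ K, q ^ k < Fintype.card E) :
    ∃ β : E, ∑ k ∈ K, β ^ q ^ k ≠ 0 := by
  obtain ⟨k₀, hk₀⟩ := hK
  by_contra! h
  have hcoeff : (∑ k ∈ K, (X : E[X]) ^ q ^ k).coeff (q ^ k₀) = 1 := by
    simp [coeff_X_pow, (Nat.pow_right_injective hq).eq_iff, hk₀]
  have hzero : ∑ k ∈ K, (X : E[X]) ^ q ^ k = 0 := by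
    refine eq_zero_of_natDegree_lt_card_of_eval_eq_zero _ Function.injective_id
      (by simpa [eval_finsetSum] using h) ?_
    have := natDegree_sum_le_of_forall_le K (fun k => (X : E[X]) ^ q ^ k)
      (n := Fintype.card E - 1) fun k hk => by rw [natDegree_X_pow]; have := hKE k hk; omega
    have := Fintype.card_pos (α := E)
    omega
  simp [hzero] at hcoeff

lemma sum_pow_mul_eq_ite {E : Type*} [Field E] {α : E} {n : ℕ} (hα : orderOf α = n) (s : ℕ) :
    ∑ i : Fin n, α ^ ((i : ℕ) * s) = if n ∣ s then (n : E) else 0 := by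
  rw [Fin.sum_univ_eq_sum_range (fun i => α ^ (i * s))]
  simp_rw [mul_comm _ s, pow_mul]
  split_ifs with h
  · simp [orderOf_dvd_iff_pow_eq_one.mp (hα ▸ h)]
  · have hne : α ^ s ≠ 1 := fun h1 => h (hα ▸ orderOf_dvd_of_pow_eq_one h1)
    rw [geom_sum_eq hne, ← pow_mul, mul_comm, pow_mul, ← hα, pow_orderOf_eq_one, one_pow,
      sub_self, zero_div]

noncomputable def traceWord (F : Type*) {E : Type*} [Field F] [Field E] [Algebra F E]
    (n : ℕ) (α β : E) (j : ℕ) : Fin n → F :=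
  fun i => Algebra.trace F E (β * α ^ ((i : ℕ) * j))

section TraceWord

variable {F E : Type*} [Field F] [Field E] [Algebra F E]

lemma sum_mul_traceWord {n : ℕ} (x : Fin n → F) (α β : E) (j : ℕ) :
    ∑ i, x i * traceWord F n α β j i =
      Algebra.trace F E (β * ∑ i, algebraMap F E (x i) * α ^ ((i : ℕ) * j)) := by
  rw [mul_sum, map_sum]
  refine sum_congr rfl fun i _ => ?_
  rw [traceWord, mul_left_comm, ← Algebra.smul_def, map_smul, smul_eq_mul]

lemma traceWord_mem_dualSet {n δ j : ℕ} (α β : E) (hj1 : 1 ≤ j) (hj : j < δ) :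
    traceWord F n α β j ∈ dualSet (bchCode F n α δ : Set (Fin n → F)) := by
  intro x hx
  rw [sum_mul_traceWord, hx j hj1 (by omega), mul_zero, map_zero]

variable [Fintype F] [Fintype E] {q m : ℕ}

lemma finrank_eq_of_card_eq_pow (hF : Fintype.card F = q) (hE : Fintype.card E = q ^ m) :
    Module.finrank F E = m :=
  Nat.pow_right_injective (hF ▸ Fintype.one_lt_card) <| by
    simpa only [hF, hE] using (Module.card_eq_pow_finrank (K := F) (V := E)).symm

lemma sum_algebraMap_traceWord_mul_pow (hF : Fintype.card F = q) (hE : Fintype.card E = q ^ m)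
    {α : E} (hα : orderOf α = q ^ m - 1) (β : E) (j j' : ℕ) :
    ∑ i : Fin (q ^ m - 1), algebraMap F E (traceWord F (q ^ m - 1) α β j i) * α ^ ((i : ℕ) * j')
      = -∑ k ∈ (range m).filter (fun k => q ^ m - 1 ∣ j * q ^ k + j'), β ^ q ^ k := by
  have hn : ((q ^ m - 1 : ℕ) : E) = -1 := by
    rw [Nat.cast_sub (hE ▸ Fintype.card_pos), Nat.cast_one, ← hE, FiniteField.cast_card_eq_zero,
      zero_sub]
  have hterm : ∀ i k : ℕ,
      (β * α ^ (i * j)) ^ q ^ k * α ^ (i * j') = β ^ q ^ k * α ^ (i * (j * q ^ k + j')) := by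
    intro i k
    ring
  simp only [traceWord, FiniteField.algebraMap_trace_eq_sum_pow, finrank_eq_of_card_eq_pow hF hE,
    Nat.card_eq_fintype_card, hF, sum_mul, hterm]
  rw [sum_comm]
  simp only [← mul_sum, sum_pow_mul_eq_ite hα, hn, sum_filter, ← sum_neg_distrib]
  refine sum_congr rfl fun k _ => ?_
  split_ifs <;> simp

lemma not_dualSet_bchCode_subset (hF : Fintype.card F = q) (hE : Fintype.card E = q ^ m)
    {α : E} (hα : orderOf α = q ^ m - 1) {δ : ℕ} (h : HasNegCosetPair q m δ) :
    ¬ dualSet (bchCode F (q ^ m - 1) α δ : Set (Fin (q ^ m - 1) → F)) ⊆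
      (bchCode F (q ^ m - 1) α δ : Set (Fin (q ^ m - 1) → F)) := by
  intro hsub
  obtain ⟨j, j', k, hj1, hj, hj'1, hj', hk, hdvd⟩ := h
  have hq : 2 ≤ q := hF ▸ Fintype.one_lt_card
  obtain ⟨β, hβ⟩ := exists_sum_pow_pow_ne_zero (E := E) hq
    (K := (range m).filter fun k => q ^ m - 1 ∣ j * q ^ k + j')
    ⟨k, mem_filter.mpr ⟨mem_range.mpr hk, hdvd⟩⟩
    fun k hk => hE ▸ Nat.pow_lt_pow_right hq (mem_range.mp (mem_filter.mp hk).1)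
  have := hsub (traceWord_mem_dualSet α β hj1 hj) j' hj'1 (by omega)
  rw [sum_algebraMap_traceWord_mul_pow hF hE hα, neg_eq_zero] at this
  exact hβ this

lemma dualSet_bchCode_subset (hF : Fintype.card F = q) (hE : Fintype.card E = q ^ m)
    {α : E} (hα : orderOf α = q ^ m - 1) {δ : ℕ} (h : ¬ HasNegCosetPair q m δ) :
    dualSet (bchCode F (q ^ m - 1) α δ : Set (Fin (q ^ m - 1) → F)) ⊆
      (bchCode F (q ^ m - 1) α δ : Set (Fin (q ^ m - 1) → F)) := by
  intro y hy j' hj'1 hj'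
  have htrace : ∀ β : E, Algebra.trace F E
      (β * ∑ i, algebraMap F E (y i) * α ^ ((i : ℕ) * j')) = 0 := by
    intro β
    have hw : traceWord F (q ^ m - 1) α β j' ∈ bchCode F _ α δ := by
      intro j hj1 hj
      rw [sum_algebraMap_traceWord_mul_pow hF hE hα, neg_eq_zero]
      refine sum_eq_zero fun k hk => absurd ?_ h
      obtain ⟨hk, hdvd⟩ := mem_filter.mp hk
      exact ⟨j', j, k, hj'1, by omega, hj1, by omega, mem_range.mp hk, hdvd⟩
    rw [← sum_mul_traceWord, ← hy _ hw]
    exact sum_congr rfl fun i _ => mul_comm _ _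
  exact (traceForm_nondegenerate F E).2 _ fun β => by rw [Algebra.traceForm_apply]; exact htrace β

end TraceWord

theorem bch_contains_euclidean_dual_iff_general
    (q m : ℕ) (hm : 2 ≤ m)
    (F E : Type*) [Field F] [Fintype F] [Field E] [Fintype E] [Algebra F E]
    (hF : Fintype.card F = q) (hE : Fintype.card E = q ^ m)
    (α : E) (hα : orderOf α = q ^ m - 1)
    (δ : ℕ) :
    dualSet (bchCode F (q ^ m - 1) α δ : Set (Fin (q ^ m - 1) → F)) ⊆
        (bchCode F (q ^ m - 1) α δ : Set (Fin (q ^ m - 1) → F)) ↔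
      δ ≤ q ^ ((m + 1) / 2) - 1 - (q - 2) * (if Odd m then 1 else 0) := by
  rw [← not_lt, ← hasNegCosetPair_iff (hF ▸ Fintype.one_lt_card) hm]
  exact ⟨fun hsub h => not_dualSet_bchCode_subset hF hE hα h hsub,
    dualSet_bchCode_subset hF hE hα⟩

/-- A primitive, narrow-sense BCH code of length `q^m - 1`, `m ≥ 2`, over `F_q`
contains its Euclidean dual code iff its designed distance `δ` satisfies
`δ ≤ q^⌈m/2⌉ - 1 - (q-2)·[m odd]`. -/
theorem bch_contains_euclidean_dual_iff
    (q m : ℕ) (hq : IsPrimePow q) (hm : 2 ≤ m)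
    (F E : Type*) [Field F] [Fintype F] [Field E] [Fintype E] [Algebra F E]
    (hF : Fintype.card F = q) (hE : Fintype.card E = q ^ m)
    (α : E) (hα : orderOf α = q ^ m - 1)
    (δ : ℕ) (hδ1 : 2 ≤ δ) (hδ2 : δ ≤ q ^ m - 1) :
    dualSet (bchCode F (q ^ m - 1) α δ : Set (Fin (q ^ m - 1) → F)) ⊆
        (bchCode F (q ^ m - 1) α δ : Set (Fin (q ^ m - 1) → F)) ↔
      δ ≤ q ^ ((m + 1) / 2) - 1 - (q - 2) * (if Odd m then 1 else 0) :=
  bch_contains_euclidean_dual_iff_general q m hm F E hF hE α hα δ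
end

section
/- Let q be a prime power, m a positive integer, and n = q^m − 1. For every integer x in the range 1 ≤ x < q^{⌈m/2⌉} + 1, the q-ary cyclotomic coset C_x = {x q^ℓ mod n : ℓ ≥ 0} has cardinality exactly m. -/
/-!
Since `q ^ m ≡ 1 [MOD n]`, the coset `C_x` is `{x q^k mod n : k < m}`, so it suffices that these
`m` residues are distinct. If `x q^i ≡ x q^j` with `i < j < m`, cancelling the unit `q^i` gives
`n ∣ x (q^d - 1)` for `d = j - i`, and also `n ∣ x (q^m - 1)`; as
`gcd (q^d - 1) (q^m - 1) = q^(gcd d m) - 1`, we get `n ∣ x (q^g - 1)` for a proper divisor `g` of `m`.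
But `g ≤ ⌊m/2⌋` and `x ≤ q^⌈m/2⌉` force `0 < x (q^g - 1) ≤ q^m - q^⌈m/2⌉ < n`.
-/

/-- The `q`-ary cyclotomic coset of `x` modulo `n`: `{x q^k mod n : k ≥ 0}`. -/
def cycCoset (q n x : ℕ) : Set ℕ := {y | ∃ k : ℕ, y = x * q ^ k % n}

lemma cycCoset_eq_image_range {q n m : ℕ} (hm : 0 < m) (hqm : q ^ m ≡ 1 [MOD n]) (x : ℕ) :
    cycCoset q n x = (Finset.range m).image (fun k => x * q ^ k % n) := by
  have hperiodic (k : ℕ) : x * q ^ k ≡ x * q ^ (k % m) [MOD n] := by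
    conv_lhs => rw [← Nat.div_add_mod k m, pow_add, pow_mul]
    simpa using ((hqm.pow (k / m)).mul_right (q ^ (k % m))).mul_left x
  ext y
  simp only [cycCoset, Set.mem_ofPred_eq, Finset.coe_image, Finset.coe_range, Set.mem_image,
    Set.mem_Iio]
  constructor
  · rintro ⟨k, rfl⟩
    exact ⟨k % m, Nat.mod_lt k hm, (hperiodic k).symm⟩
  · rintro ⟨k, -, rfl⟩
    exact ⟨k, rfl⟩

lemma Nat.dvd_mul_pow_gcd_sub_one {n x q a b : ℕ} (ha : n ∣ x * (q ^ a - 1))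
    (hb : n ∣ x * (q ^ b - 1)) : n ∣ x * (q ^ Nat.gcd a b - 1) := by
  rw [← Nat.pow_sub_one_gcd_pow_sub_one, ← Nat.gcd_mul_left]
  exact Nat.dvd_gcd ha hb

lemma Nat.dvd_mul_pow_sub_one_of_modEq {n x q i j : ℕ} (hq : Nat.Coprime n q) (hij : i ≤ j)
    (h : x * q ^ i ≡ x * q ^ j [MOD n]) : n ∣ x * (q ^ (j - i) - 1) := by
  have hcancel : x ≡ x * q ^ (j - i) [MOD n] := by
    refine Nat.ModEq.cancel_left_of_coprime (c := q ^ i) (Nat.Coprime.pow_right i hq) ?_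
    rwa [mul_left_comm, ← pow_add, Nat.add_sub_cancel' hij, mul_comm]
  rw [Nat.mul_sub, mul_one]
  exact Nat.dvd_of_mod_eq_zero (Nat.sub_mod_eq_zero_of_mod_eq hcancel.symm)

lemma Nat.le_div_two_of_dvd_of_lt {g m : ℕ} (hdvd : g ∣ m) (hlt : g < m) : g ≤ m / 2 := by
  obtain ⟨c, rfl⟩ := hdvd
  have hc : 2 ≤ c := by
    rcases c with _ | _ | c
    · simp at hlt
    · simp at hlt
    · omega
  rw [Nat.le_div_iff_mul_le two_pos]
  exact Nat.mul_le_mul_left g hc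

lemma mul_pow_sub_one_lt {q m g x : ℕ} (hq : 2 ≤ q) (hm : 0 < m) (hg : g ≤ m / 2)
    (hx : x ≤ q ^ ((m + 1) / 2)) : x * (q ^ g - 1) < q ^ m - 1 := by
  have hq_le : q ≤ q ^ ((m + 1) / 2) := Nat.le_self_pow (by omega) q
  have hle_qm : q ^ ((m + 1) / 2) ≤ q ^ m := Nat.pow_le_pow_right (by omega) (by omega)
  calc x * (q ^ g - 1) ≤ q ^ ((m + 1) / 2) * (q ^ (m / 2) - 1) :=
        Nat.mul_le_mul hx (Nat.sub_le_sub_right (Nat.pow_le_pow_right (by omega) hg) 1)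
    _ = q ^ m - q ^ ((m + 1) / 2) := by
        rw [Nat.mul_sub, mul_one, ← pow_add, show (m + 1) / 2 + m / 2 = m by omega]
    _ < q ^ m - 1 := by omega

lemma not_mul_pow_modEq_mul_pow {q m x i j : ℕ} (hq : 2 ≤ q) (hx1 : 0 < x)
    (hx2 : x ≤ q ^ ((m + 1) / 2)) (hij : i < j) (hjm : j < m) :
    ¬x * q ^ i ≡ x * q ^ j [MOD q ^ m - 1] := by
  intro h
  have hcop : Nat.Coprime (q ^ m - 1) q :=
    ((Nat.coprime_self_sub_left (Nat.one_le_pow _ _ (by omega))).mpr (Nat.coprime_one_left _))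
      |>.coprime_dvd_right (dvd_pow_self q (by omega))
  have hdvd : q ^ m - 1 ∣ x * (q ^ Nat.gcd (j - i) m - 1) :=
    Nat.dvd_mul_pow_gcd_sub_one (Nat.dvd_mul_pow_sub_one_of_modEq hcop hij.le h) (dvd_mul_left _ x)
  have hg_pos : 0 < Nat.gcd (j - i) m := Nat.gcd_pos_of_pos_right _ (by omega)
  have hg_le : Nat.gcd (j - i) m ≤ m / 2 :=
    Nat.le_div_two_of_dvd_of_lt (Nat.gcd_dvd_right _ _)
      ((Nat.gcd_le_left m (by omega)).trans_lt (by omega))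
  have hpos : 0 < x * (q ^ Nat.gcd (j - i) m - 1) :=
    Nat.mul_pos hx1 (Nat.sub_pos_of_lt (Nat.one_lt_pow hg_pos.ne' (by omega)))
  exact (Nat.le_of_dvd hpos hdvd).not_gt (mul_pow_sub_one_lt hq (by omega) hg_le hx2)

/-- For `n = q^m - 1`, every `q`-ary cyclotomic coset `C_x` with
`1 ≤ x < q^⌈m/2⌉ + 1` has cardinality exactly `m`. -/
theorem cycCoset_card_eq
    (q m : ℕ) (hq : IsPrimePow q) (hm : 0 < m)
    (x : ℕ) (hx1 : 1 ≤ x) (hx2 : x < q ^ ((m + 1) / 2) + 1) :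
    (cycCoset q (q ^ m - 1) x).ncard = m := by
  have hq2 : 2 ≤ q := hq.two_le
  have hqm : q ^ m ≡ 1 [MOD q ^ m - 1] := Nat.modEq_sub (Nat.one_le_pow _ _ (by omega))
  rw [cycCoset_eq_image_range hm hqm, Set.ncard_coe_finset, Finset.card_image_of_injOn,
    Finset.card_range]
  intro i hi j hj hij
  simp only [Finset.coe_range, Set.mem_Iio] at hi hj
  by_contra hne
  rcases lt_or_gt_of_ne hne with hlt | hlt
  · exact not_mul_pow_modEq_mul_pow hq2 hx1 (by omega) hlt hj hij
  · exact not_mul_pow_modEq_mul_pow hq2 hx1 (by omega) hlt hi hij.symm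
end

section
/- Let q be a prime power, m a positive integer, and n = q^m − 1. Let x and y be integers in the range 1 ≤ x, y < q^{⌈m/2⌉} + 1 with x ≢ 0 (mod q) and y ≢ 0 (mod q). If x ≠ y, then the q-ary cyclotomic cosets of x and y modulo n are disjoint: C_x ∩ C_y = ∅. -/
/-!
Modulo `n = q^m - 1` multiplication by `q` has order dividing `m`, so a common element of `C_x`
and `C_y` gives `x ≡ y q^j` for some `0 ≤ j < m`, and also `y ≡ x q^(m-j)`. With
`t = ⌈m/2⌉` one of `j`, `m - j` is at most `m - t`. Both `x` and `y` are below `q^t` (the value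
`q^t` itself is divisible by `q`), so for that exponent `e` both sides of the congruence lie in
`[1, n]` and are therefore equal; then either `e = 0` and `x = y`, or `q` divides `x` or `y`.
-/

namespace Nat

variable {q m : ℕ}

theorem pow_modEq_one_pow_sub_one (hq : 0 < q) (m : ℕ) : q ^ m ≡ 1 [MOD q ^ m - 1] :=
  Nat.modEq_sub (Nat.one_le_pow _ _ hq)

theorem pow_modEq_pow_mod_pow_sub_one (hq : 0 < q) (m s : ℕ) :
    q ^ s ≡ q ^ (s % m) [MOD q ^ m - 1] :=
  calc q ^ s = (q ^ m) ^ (s / m) * q ^ (s % m) := by rw [← pow_mul, ← pow_add, Nat.div_add_mod]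
    _ ≡ 1 ^ (s / m) * q ^ (s % m) [MOD q ^ m - 1] :=
        ((pow_modEq_one_pow_sub_one hq m).pow _).mul_right _
    _ = q ^ (s % m) := by rw [one_pow, one_mul]

theorem exists_lt_modEq_mul_pow (hq : 0 < q) (hm : 0 < m) {x y a b : ℕ}
    (h : x * q ^ a ≡ y * q ^ b [MOD q ^ m - 1]) :
    ∃ j < m, x ≡ y * q ^ j [MOD q ^ m - 1] := by
  refine ⟨(b + a * (m - 1)) % m, Nat.mod_lt _ hm, ?_⟩
  have ham : (q ^ m) ^ a = q ^ a * q ^ (a * (m - 1)) := by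
    rw [← pow_mul, ← pow_add, Nat.mul_sub_one, Nat.add_sub_cancel' (Nat.le_mul_of_pos_right a hm),
      mul_comm]
  calc x = x * 1 ^ a := by rw [one_pow, mul_one]
    _ ≡ x * (q ^ m) ^ a [MOD q ^ m - 1] :=
        (((pow_modEq_one_pow_sub_one hq m).pow a).mul_left x).symm
    _ = x * q ^ a * q ^ (a * (m - 1)) := by rw [ham, mul_assoc]
    _ ≡ y * q ^ b * q ^ (a * (m - 1)) [MOD q ^ m - 1] := h.mul_right _
    _ = y * q ^ (b + a * (m - 1)) := by rw [pow_add, mul_assoc]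
    _ ≡ y * q ^ ((b + a * (m - 1)) % m) [MOD q ^ m - 1] :=
        (pow_modEq_pow_mod_pow_sub_one hq m _).mul_left y

theorem ModEq.modEq_mul_pow_sub (hq : 0 < q) {x y j : ℕ} (hj : j ≤ m)
    (h : x ≡ y * q ^ j [MOD q ^ m - 1]) : y ≡ x * q ^ (m - j) [MOD q ^ m - 1] :=
  calc y = y * 1 := (mul_one y).symm
    _ ≡ y * q ^ m [MOD q ^ m - 1] := ((pow_modEq_one_pow_sub_one hq m).mul_left y).symm
    _ = y * q ^ j * q ^ (m - j) := by rw [mul_assoc, ← pow_add, Nat.add_sub_cancel' hj]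
    _ ≡ x * q ^ (m - j) [MOD q ^ m - 1] := (h.mul_right _).symm

theorem eq_of_modEq_of_pos_of_lt_pow {x y : ℕ} (hx : 0 < x) (hxm : x < q ^ m) (hy : 0 < y)
    (hym : y < q ^ m) (h : x ≡ y [MOD q ^ m - 1]) : x = y :=
  h.eq_of_abs_lt (by rw [abs_sub_lt_iff]; omega)

theorem eq_mul_pow_of_modEq (hq : 0 < q) {x y k j : ℕ} (hx : 0 < x) (hxm : x < q ^ m)
    (hy : 0 < y) (hyk : y < q ^ k) (hkj : k + j ≤ m) (h : x ≡ y * q ^ j [MOD q ^ m - 1]) :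
    x = y * q ^ j :=
  eq_of_modEq_of_pos_of_lt_pow hx hxm (Nat.mul_pos hy (pow_pos hq j))
    (calc y * q ^ j < q ^ k * q ^ j := Nat.mul_lt_mul_of_pos_right hyk (pow_pos hq j)
      _ = q ^ (k + j) := (pow_add q k j).symm
      _ ≤ q ^ m := Nat.pow_le_pow_right hq hkj) h

theorem lt_pow_of_lt_pow_add_one_of_not_dvd {x t : ℕ} (ht : t ≠ 0) (hx : x < q ^ t + 1)
    (hxq : ¬ q ∣ x) : x < q ^ t :=
  (Nat.le_of_lt_succ hx).lt_of_ne fun h => hxq (h ▸ dvd_pow_self q ht)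

end Nat

/-- For `n = q^m - 1` and `1 ≤ x, y < q^⌈m/2⌉ + 1` with `x, y` not divisible
by `q`, distinct `x ≠ y` have disjoint `q`-ary cyclotomic cosets. -/
theorem cycCoset_disjoint
    (q m : ℕ) (hq : IsPrimePow q) (hm : 0 < m)
    (x y : ℕ) (hx1 : 1 ≤ x) (hx2 : x < q ^ ((m + 1) / 2) + 1)
    (hy1 : 1 ≤ y) (hy2 : y < q ^ ((m + 1) / 2) + 1)
    (hxq : ¬ q ∣ x) (hyq : ¬ q ∣ y) (hxy : x ≠ y) :
    cycCoset q (q ^ m - 1) x ∩ cycCoset q (q ^ m - 1) y = ∅ := by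
  have hq0 : 0 < q := hq.pos
  set t := (m + 1) / 2
  have hxt := Nat.lt_pow_of_lt_pow_add_one_of_not_dvd (by omega) hx2 hxq
  have hyt := Nat.lt_pow_of_lt_pow_add_one_of_not_dvd (by omega) hy2 hyq
  have hqt : q ^ t ≤ q ^ m := Nat.pow_le_pow_right hq0 (by omega)
  rw [Set.eq_empty_iff_forall_notMem]
  rintro z ⟨⟨a, rfl⟩, b, hb⟩
  obtain ⟨j, hjm, hj⟩ := Nat.exists_lt_modEq_mul_pow hq0 hm hb
  rcases le_or_gt j (m - t) with hjt | hjt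
  · have hx := Nat.eq_mul_pow_of_modEq hq0 hx1 (hxt.trans_le hqt) hy1 hyt (by omega) hj
    rcases j.eq_zero_or_pos with rfl | hj0
    · exact hxy (by simpa using hx)
    · exact hxq (hx ▸ dvd_mul_of_dvd_right (dvd_pow_self q hj0.ne') y)
  · have hy := Nat.eq_mul_pow_of_modEq hq0 hy1 (hyt.trans_le hqt) hx1 hxt (by omega)
      (hj.modEq_mul_pow_sub hq0 hjm.le)
    exact hyq (hy ▸ dvd_mul_of_dvd_right (dvd_pow_self q (by omega)) x)
end

section
/- Let q be a prime power, m a positive integer, and n = q^m − 1. Let α be a primitive element of F_{q^m}, and for an integer δ with 2 ≤ δ ≤ q^{⌈m/2⌉} + 1 let C be the primitive, narrow-sense BCH code of designed distance δ, i.e. C = {c ∈ F_q^n : Σ_{i=0}^{n−1} c_i α^{ij} = 0 in F_{q^m} for every integer j with 1 ≤ j ≤ δ−1}. Then the dimension of C as an F_q-vector space equals q^m − 1 − m·⌈(δ−1)(1 − 1/q)⌉. -/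
/-!
For `q ∤ j` and `1 ≤ j ≤ δ - 1 ≤ q ^ ⌈m/2⌉`, the bound forces the cyclotomic cosets
`{j q^k mod q^m - 1 : k < m}` to have `m` elements each and to be pairwise disjoint. So the
minimal polynomials over `F_q` of the `α ^ j` with `q ∤ j` have degree `m` (their roots are the
`m` Frobenius conjugates) and are pairwise coprime; every other zero `α ^ (q^k j)` of the code is
a conjugate of one of these. Their product `g` therefore generates the code: a word lies in it iff
`g` divides its polynomial, so the dimension is `n - deg g = n - m · #{j ≤ δ - 1 : q ∤ j}`.
-/

open Polynomial Finset Module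

theorem Nat.ModEq.eq_of_pos_of_le {n a b : ℕ} (h : a ≡ b [MOD n]) (ha : 0 < a) (han : a ≤ n)
    (hb : 0 < b) (hbn : b ≤ n) : a = b := by
  have h' : a - 1 + 1 ≡ b - 1 + 1 [MOD n] := by rwa [Nat.sub_add_cancel ha, Nat.sub_add_cancel hb]
  have := (Nat.ModEq.add_right_cancel' 1 h').eq_of_lt_of_lt (by omega) (by omega)
  omega

theorem mul_pow_eq_of_modEq {q m j j' d : ℕ} (hq : 1 < q) (hj : 0 < j)
    (hjq : j < q ^ ((m + 1) / 2)) (hj' : 0 < j') (hj'q : j' < q ^ ((m + 1) / 2))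
    (hd : d ≤ m / 2) (h : j * q ^ d ≡ j' [MOD q ^ m - 1]) : j * q ^ d = j' := by
  have hsplit : q ^ ((m + 1) / 2) * q ^ (m / 2) = q ^ m := by rw [← pow_add]; congr 1; omega
  have hpos : 0 < q ^ (m / 2) := by positivity
  refine h.eq_of_pos_of_le (by positivity) ?_ hj' ?_
  · calc j * q ^ d ≤ (q ^ ((m + 1) / 2) - 1) * q ^ (m / 2) :=
          Nat.mul_le_mul (by omega) (Nat.pow_le_pow_right (by omega) hd)
      _ = q ^ m - q ^ (m / 2) := by rw [Nat.sub_mul, one_mul, hsplit]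
      _ ≤ q ^ m - 1 := by omega
  · have := Nat.pow_le_pow_right (by omega : 0 < q) (by omega : (m + 1) / 2 ≤ m)
    omega

theorem eq_of_mul_pow_modEq_mul_pow {q m j j' a b : ℕ} (hq : 1 < q)
    (hj : 0 < j) (hjq : j ≤ q ^ ((m + 1) / 2)) (hqj : ¬ q ∣ j)
    (hj' : 0 < j') (hj'q : j' ≤ q ^ ((m + 1) / 2)) (hqj' : ¬ q ∣ j')
    (ha : a < m) (hb : b < m) (h : j * q ^ a ≡ j' * q ^ b [MOD q ^ m - 1]) :
    j = j' ∧ a = b := by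
  wlog hba : b ≤ a generalizing j j' a b
  · obtain ⟨hjj', hab⟩ := this hj' hj'q hqj' hj hjq hqj hb ha h.symm (by omega)
    exact ⟨hjj'.symm, hab.symm⟩
  have hlt : ∀ i, i ≤ q ^ ((m + 1) / 2) → ¬ q ∣ i → i < q ^ ((m + 1) / 2) :=
    fun i hi hqi => lt_of_le_of_ne hi fun he => hqi (he ▸ dvd_pow_self q (by omega))
  have hqm : q ^ m ≡ 1 [MOD q ^ m - 1] := Nat.modEq_sub (Nat.one_le_pow _ _ (by omega))
  have hshift : j * q ^ (a - b) ≡ j' [MOD q ^ m - 1] :=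
    calc j * q ^ (a - b) ≡ j * q ^ (a - b) * q ^ m [MOD q ^ m - 1] := by
          simpa using (hqm.mul_left (j * q ^ (a - b))).symm
      _ = j * q ^ a * q ^ (m - b) := by
          rw [mul_assoc, mul_assoc, ← pow_add, ← pow_add]; congr 2; omega
      _ ≡ j' * q ^ b * q ^ (m - b) [MOD q ^ m - 1] := h.mul_right _
      _ = j' * q ^ m := by rw [mul_assoc, ← pow_add]; congr 2; omega
      _ ≡ j' [MOD q ^ m - 1] := by simpa using hqm.mul_left j'
  by_cases hsmall : a - b ≤ m / 2
  · have heq := mul_pow_eq_of_modEq hq hj (hlt j hjq hqj) hj' (hlt j' hj'q hqj') hsmall hshift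
    have hd : a - b = 0 := by
      by_contra hd
      exact hqj' (heq ▸ dvd_mul_of_dvd_right (dvd_pow_self q hd) j)
    rw [hd, pow_zero, mul_one] at heq
    exact ⟨heq, by omega⟩
  · have hshift' : j' * q ^ (m - (a - b)) ≡ j [MOD q ^ m - 1] :=
      calc j' * q ^ (m - (a - b)) ≡ j * q ^ (a - b) * q ^ (m - (a - b)) [MOD q ^ m - 1] :=
            hshift.symm.mul_right _
        _ = j * q ^ m := by rw [mul_assoc, ← pow_add]; congr 2; omega
        _ ≡ j [MOD q ^ m - 1] := by simpa using hqm.mul_left j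
    have heq := mul_pow_eq_of_modEq hq hj' (hlt j' hj'q hqj') hj (hlt j hjq hqj) (by omega) hshift'
    exact absurd (heq ▸ dvd_mul_of_dvd_right (dvd_pow_self q (by omega)) j') hqj

theorem isCoprime_minpoly_of_aeval_ne_zero {F E : Type*} [Field F] [Field E] [Algebra F E]
    {x y : E} (hy : IsIntegral F y) (h : aeval y (minpoly F x) ≠ 0) :
    IsCoprime (minpoly F y) (minpoly F x) :=
  ((minpoly.irreducible hy).isCoprime_or_dvd _).resolve_right fun hdvd => h (minpoly.dvd_iff.1 hdvd)

theorem card_aroots_toFinset_le_natDegree {R S : Type*} [CommRing R] [CommRing S] [IsDomain S]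
    [Algebra R S] [DecidableEq S] (p : R[X]) : #(p.aroots S).toFinset ≤ p.natDegree :=
  (Multiset.toFinset_card_le _).trans <| (card_roots' _).trans natDegree_map_le

section FiniteField

variable {F E : Type*} [Field F] [Fintype F] [Field E] [Algebra F E]

theorem aeval_pow_card_pow (P : F[X]) (x : E) (k : ℕ) :
    aeval (x ^ Fintype.card F ^ k) P = aeval x P ^ Fintype.card F ^ k := by
  have hfrob : ∀ y : E, (FiniteField.frobeniusAlgHom F E ^ k) y = y ^ Fintype.card F ^ k :=
    fun y => by rw [AlgHom.coe_pow, FiniteField.coe_frobeniusAlgHom, pow_iterate]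
  rw [← hfrob, ← hfrob, aeval_algHom_apply]

variable [Finite E]

theorem image_pow_card_pow_subset_aroots_minpoly [DecidableEq E] (x : E) (m : ℕ) :
    (range m).image (fun k => x ^ Fintype.card F ^ k) ⊆ ((minpoly F x).aroots E).toFinset := by
  simp only [subset_iff, mem_image, Multiset.mem_toFinset, mem_aroots]
  rintro _ ⟨k, -, rfl⟩
  refine ⟨minpoly.ne_zero (.of_finite F x), ?_⟩
  rw [aeval_pow_card_pow, minpoly.aeval, zero_pow (by positivity)]

variable {x : E} (hx : Set.InjOn (fun k => x ^ Fintype.card F ^ k) (range (finrank F E)))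
include hx

theorem aroots_minpoly_eq_image_pow_card_pow [DecidableEq E] :
    ((minpoly F x).aroots E).toFinset =
      (range (finrank F E)).image (fun k => x ^ Fintype.card F ^ k) := by
  refine (eq_of_subset_of_card_le (image_pow_card_pow_subset_aroots_minpoly x _) ?_).symm
  rw [card_image_of_injOn hx, card_range]
  exact (card_aroots_toFinset_le_natDegree _).trans (minpoly.natDegree_le x)

theorem aeval_minpoly_eq_zero_iff {y : E} :
    aeval y (minpoly F x) = 0 ↔ ∃ k < finrank F E, x ^ Fintype.card F ^ k = y := by
  classical
  have hroots := aroots_minpoly_eq_image_pow_card_pow hx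
  rw [Finset.ext_iff] at hroots
  simpa [mem_aroots, minpoly.ne_zero (IsIntegral.of_finite F x)] using hroots y

theorem natDegree_minpoly_eq_finrank : (minpoly F x).natDegree = finrank F E := by
  classical
  refine le_antisymm (minpoly.natDegree_le x) ?_
  calc finrank F E = #((minpoly F x).aroots E).toFinset := by
        rw [aroots_minpoly_eq_image_pow_card_pow hx, card_image_of_injOn hx, card_range]
    _ ≤ (minpoly F x).natDegree := card_aroots_toFinset_le_natDegree _

end FiniteField

section LinearCode

variable {F : Type*} [Field F] [DecidableEq F]

theorem range_modByMonicHom_comp_ofFn {n : ℕ} {g : F[X]} (hg : g.Monic) (hgn : g.natDegree ≤ n) :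
    LinearMap.range (modByMonicHom g ∘ₗ ofFn n) = degreeLT F g.natDegree := by
  apply le_antisymm
  · rintro _ ⟨c, rfl⟩
    rw [mem_degreeLT, ← degree_eq_natDegree hg.ne_zero]
    exact degree_modByMonic_lt _ hg
  · intro P hP
    rw [mem_degreeLT] at hP
    refine ⟨toFn n P, ?_⟩
    rcases eq_or_ne P 0 with rfl | hP0
    · simp
    have hPn : P.natDegree < n := by
      have := (natDegree_lt_iff_degree_lt hP0).2 hP
      omega
    rw [LinearMap.comp_apply, ofFn_comp_toFn_eq_id_of_natDegree_lt hPn, modByMonicHom_apply,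
      (modByMonic_eq_self_iff hg).2 (degree_eq_natDegree hg.ne_zero ▸ hP)]

theorem finrank_eq_of_forall_mem_iff_dvd {n : ℕ} {g : F[X]} (hg : g.Monic)
    (hgn : g.natDegree ≤ n) (V : Submodule F (Fin n → F)) (hV : ∀ c, c ∈ V ↔ g ∣ ofFn n c) :
    finrank F V = n - g.natDegree := by
  obtain rfl : V = LinearMap.ker (modByMonicHom g ∘ₗ ofFn n) :=
    Submodule.ext fun c => (hV c).trans (mem_ker_modByMonic hg).symm
  have hrank := LinearMap.finrank_range_add_finrank_ker (modByMonicHom g ∘ₗ ofFn n)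
  rw [range_modByMonicHom_comp_ofFn hg hgn, (degreeLTEquiv F _).finrank_eq, finrank_fin_fun,
    finrank_fin_fun] at hrank
  omega

theorem aeval_ofFn {E : Type*} [CommRing E] [Algebra F E] {n : ℕ} (c : Fin n → F) (x : E) :
    aeval x (ofFn n c) = ∑ i, algebraMap F E (c i) * x ^ (i : ℕ) := by
  simp only [ofFn_eq_sum_monomial, map_sum, aeval_monomial]

end LinearCode

theorem mem_bchCode_iff {F E : Type*} [Field F] [DecidableEq F] [Field E] [Algebra F E]
    {n : ℕ} {α : E} {δ : ℕ} {c : Fin n → F} :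
    c ∈ bchCode F n α δ ↔ ∀ j ∈ Ioc 0 (δ - 1), aeval (α ^ j) (ofFn n c) = 0 := by
  simp only [aeval_ofFn, ← pow_mul', mem_Ioc, and_imp]
  rfl

/-- For `δ - 1 ≤ q ^ ⌈m/2⌉` these are the leaders of the cyclotomic cosets mod `q ^ m - 1` that
meet `[1, δ - 1]`. -/
def cosetLeaders (q δ : ℕ) : Finset ℕ := {j ∈ Ioc 0 (δ - 1) | ¬ q ∣ j}

theorem card_cosetLeaders (q δ : ℕ) : #(cosetLeaders q δ) = (δ - 1) - (δ - 1) / q := by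
  rw [cosetLeaders, filter_not, card_sdiff_of_subset (filter_subset _ _),
    Nat.Ioc_filter_dvd_card_eq_div, Nat.card_Ioc, Nat.sub_zero]

theorem eq_of_pow_pow_eq_pow_pow {M : Type*} [Monoid M] {α : M} {q m δ : ℕ} (hq : 1 < q)
    (hα : orderOf α = q ^ m - 1) (hδ : δ ≤ q ^ ((m + 1) / 2) + 1) {j j' a b : ℕ}
    (hj : j ∈ cosetLeaders q δ) (hj' : j' ∈ cosetLeaders q δ) (ha : a < m) (hb : b < m)
    (h : (α ^ j) ^ q ^ a = (α ^ j') ^ q ^ b) : j = j' ∧ a = b := by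
  simp only [cosetLeaders, mem_filter, mem_Ioc] at hj hj'
  have hαfin : IsOfFinOrder α := orderOf_pos_iff.1 <| by
    rw [hα]; have := Nat.one_lt_pow (by omega : m ≠ 0) hq; omega
  rw [← pow_mul, ← pow_mul, hαfin.pow_eq_pow_iff_modEq, hα] at h
  exact eq_of_mul_pow_modEq_mul_pow hq hj.1.1 (by omega) hj.2 hj'.1.1 (by omega) hj'.2 ha hb h

noncomputable def bchGenerator (F : Type*) {E : Type*} [Field F] [Fintype F] [Field E]
    [Algebra F E] (α : E) (δ : ℕ) : F[X] :=
  ∏ j ∈ cosetLeaders (Fintype.card F) δ, minpoly F (α ^ j)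

section BCH

variable {F E : Type*} [Field F] [Fintype F] [Field E] [Algebra F E] {α : E} {δ : ℕ}

theorem forall_aeval_eq_zero_iff_forall_minpoly_dvd (P : F[X]) :
    (∀ j ∈ Ioc 0 (δ - 1), aeval (α ^ j) P = 0) ↔
      ∀ j ∈ cosetLeaders (Fintype.card F) δ, minpoly F (α ^ j) ∣ P := by
  refine ⟨fun h j hj => minpoly.dvd_iff.2 (h j (mem_filter.1 hj).1), fun h j hj => ?_⟩
  rw [mem_Ioc] at hj
  obtain ⟨k, j₀, hqj₀, rfl⟩ :=
    Nat.exists_eq_pow_mul_and_not_dvd hj.1.ne' _ (Fintype.one_lt_card (α := F)).ne'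
  have hj₀ : j₀ ∈ cosetLeaders (Fintype.card F) δ := by
    have : j₀ ≤ Fintype.card F ^ k * j₀ := Nat.le_mul_of_pos_left _ (by positivity)
    simp only [cosetLeaders, mem_filter, mem_Ioc]
    exact ⟨⟨Nat.pos_of_ne_zero (by rintro rfl; simp at hj), by omega⟩, hqj₀⟩
  rw [mul_comm, pow_mul, aeval_pow_card_pow, minpoly.dvd_iff.1 (h j₀ hj₀),
    zero_pow (by positivity)]

theorem bchGenerator_monic [Finite E] : (bchGenerator F α δ).Monic :=
  monic_prod_of_monic _ _ fun _ _ => minpoly.monic (.of_finite F _)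

variable {m : ℕ} (hE : finrank F E = m) (hα : orderOf α = Fintype.card F ^ m - 1)
  (hδ : δ ≤ Fintype.card F ^ ((m + 1) / 2) + 1)
include hE hα hδ

theorem injOn_pow_pow_card_pow {j : ℕ} (hj : j ∈ cosetLeaders (Fintype.card F) δ) :
    Set.InjOn (fun k => (α ^ j) ^ Fintype.card F ^ k) (range (finrank F E)) := by
  intro a ha b hb hab
  rw [coe_range, Set.mem_Iio, hE] at ha hb
  exact (eq_of_pow_pow_eq_pow_pow Fintype.one_lt_card hα hδ hj hj ha hb hab).2

variable [Finite E]

theorem pairwise_isCoprime_minpoly : (cosetLeaders (Fintype.card F) δ : Set ℕ).Pairwise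
    (Function.onFun IsCoprime fun j : ℕ => minpoly F (α ^ j)) := by
  intro j hj j' hj' hne
  refine isCoprime_minpoly_of_aeval_ne_zero (.of_finite F _) fun h => hne ?_
  obtain ⟨k, hk, hjk⟩ := (aeval_minpoly_eq_zero_iff (injOn_pow_pow_card_pow hE hα hδ hj')).1 h
  rw [hE] at hk
  exact (eq_of_pow_pow_eq_pow_pow Fintype.one_lt_card hα hδ hj' hj hk (b := 0) (by omega)
    (by rwa [pow_zero, pow_one])).1.symm

theorem bchGenerator_dvd_iff (P : F[X]) :
    bchGenerator F α δ ∣ P ↔ ∀ j ∈ cosetLeaders (Fintype.card F) δ, minpoly F (α ^ j) ∣ P :=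
  ⟨fun h _ hj => (dvd_prod_of_mem _ hj).trans h,
    prod_dvd_of_coprime (pairwise_isCoprime_minpoly hE hα hδ)⟩

theorem natDegree_bchGenerator :
    (bchGenerator F α δ).natDegree = m * #(cosetLeaders (Fintype.card F) δ) := by
  rw [bchGenerator, natDegree_prod _ _ fun j _ => minpoly.ne_zero (.of_finite F _),
    sum_congr rfl fun j hj => (natDegree_minpoly_eq_finrank (injOn_pow_pow_card_pow hE hα hδ hj)),
    sum_const, smul_eq_mul, hE, mul_comm]

theorem natDegree_bchGenerator_le : (bchGenerator F α δ).natDegree ≤ Fintype.card F ^ m - 1 := by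
  have hm : 0 < m := hE ▸ finrank_pos
  have hn : 0 < Fintype.card F ^ m - 1 := by
    have := Nat.one_lt_pow hm.ne' (Fintype.one_lt_card (α := F)); omega
  have hdvd : bchGenerator F α δ ∣ X ^ (Fintype.card F ^ m - 1) - 1 := by
    refine (bchGenerator_dvd_iff hE hα hδ _).2 fun j _ => minpoly.dvd_iff.2 ?_
    rw [map_sub, map_pow, aeval_X, map_one, ← pow_mul, mul_comm, pow_mul, ← hα,
      pow_orderOf_eq_one, one_pow, sub_self]
  calc (bchGenerator F α δ).natDegree ≤ (X ^ (Fintype.card F ^ m - 1) - 1 : F[X]).natDegree :=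
        natDegree_le_of_dvd hdvd (X_pow_sub_C_ne_zero hn 1)
    _ = Fintype.card F ^ m - 1 := natDegree_X_pow_sub_C

end BCH

theorem bch_dimension_general
    (q m : ℕ)
    (F E : Type*) [Field F] [Fintype F] [Field E] [Fintype E] [Algebra F E]
    (hF : Fintype.card F = q) (hE : Fintype.card E = q ^ m)
    (α : E) (hα : orderOf α = q ^ m - 1)
    (δ : ℕ) (hδ2 : δ ≤ q ^ ((m + 1) / 2) + 1) :
    Module.finrank F (bchCode F (q ^ m - 1) α δ) =
      q ^ m - 1 - m * ((δ - 1) - (δ - 1) / q) := by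
  classical
  subst hF
  have hrank : finrank F E = m :=
    Nat.pow_right_injective Fintype.one_lt_card (by rw [← card_eq_pow_finrank, hE] :
      Fintype.card F ^ finrank F E = Fintype.card F ^ m)
  rw [← card_cosetLeaders, ← natDegree_bchGenerator hrank hα hδ2]
  refine finrank_eq_of_forall_mem_iff_dvd bchGenerator_monic
    (natDegree_bchGenerator_le hrank hα hδ2) _ fun c => ?_
  rw [mem_bchCode_iff, forall_aeval_eq_zero_iff_forall_minpoly_dvd,
    bchGenerator_dvd_iff hrank hα hδ2]

/-- A primitive, narrow-sense BCH code of length `q^m - 1` over `F_q` with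
designed distance `2 ≤ δ ≤ q^⌈m/2⌉ + 1` has dimension
`q^m - 1 - m·⌈(δ-1)(1-1/q)⌉`, where `⌈(δ-1)(1-1/q)⌉ = (δ-1) - ⌊(δ-1)/q⌋`. -/
theorem bch_dimension
    (q m : ℕ) (hq : IsPrimePow q) (hm : 0 < m)
    (F E : Type*) [Field F] [Fintype F] [Field E] [Fintype E] [Algebra F E]
    (hF : Fintype.card F = q) (hE : Fintype.card E = q ^ m)
    (α : E) (hα : orderOf α = q ^ m - 1)
    (δ : ℕ) (hδ1 : 2 ≤ δ) (hδ2 : δ ≤ q ^ ((m + 1) / 2) + 1) :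
    Module.finrank F (bchCode F (q ^ m - 1) α δ) =
      q ^ m - 1 - m * ((δ - 1) - (δ - 1) / q) :=
  bch_dimension_general q m F E hF hE α hα δ hδ2
end

section
/- Let q be a prime power, m a positive integer, and n = q^m − 1. Let α be a primitive element of F_{q^m}, and let C be the primitive, narrow-sense BCH code over F_q of designed distance δ, i.e. C = {c ∈ F_q^n : Σ_{i=0}^{n−1} c_i α^{ij} = 0 for all 1 ≤ j ≤ δ−1}. If δ ≡ 0 (mod q) and δ + 1 ≤ n, then the minimum distance of C is at least δ + 1. -/
open Finset

theorem eq_zero_of_sum_mul_pow_eq_zero_of_hammingNorm_le {ι R : Type*} [Fintype ι] [CommRing R]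
    [IsDomain R] [DecidableEq R] {x w : ι → R} {d : ℕ} (hx : Function.Injective x)
    (hx0 : ∀ i, x i ≠ 0) (hw : hammingNorm w ≤ d)
    (h : ∀ j, 1 ≤ j → j ≤ d → ∑ i, w i * x i ^ j = 0) : w = 0 := by
  set S : Finset ι := {i | w i ≠ 0}
  let e : Fin #S ≃ S := S.equivFin.symm
  have hsum : ∀ k : Fin #S, ∑ l, w (e l) * x (e l) * x (e l) ^ (k : ℕ) = 0 := fun k => by
    calc ∑ l, w (e l) * x (e l) * x (e l) ^ (k : ℕ)
        = ∑ i ∈ S, w i * x i ^ ((k : ℕ) + 1) := by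
          rw [← sum_coe_sort S, ← e.sum_comp]
          simp only [pow_succ]
          exact sum_congr rfl fun _ _ => by ring
      _ = ∑ i, w i * x i ^ ((k : ℕ) + 1) :=
          sum_filter_of_ne fun i _ hi => left_ne_zero_of_mul hi
      _ = 0 := h _ (by omega) (by have := k.2; have : #S ≤ d := hw; omega)
  have hwe := Matrix.eq_zero_of_forall_pow_sum_mul_pow_eq_zero
    (hx.comp (Subtype.val_injective.comp e.injective)) hsum
  ext i
  by_contra hi
  have := congrFun hwe (e.symm ⟨i, by simpa [S] using hi⟩)
  simp only [Equiv.apply_symm_apply, Pi.zero_apply] at this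
  exact hi (by simpa [hx0 i] using this)

theorem le_hammingNorm_of_mem_bchCode {F E : Type*} [Field F] [DecidableEq F] [Field E]
    [Algebra F E] {n : ℕ} {α : E} (hα : IsPrimitiveRoot α n) {δ : ℕ} {c : Fin n → F}
    (hc : c ∈ bchCode F n α δ) (hc0 : c ≠ 0) : δ ≤ hammingNorm c := by
  classical
  by_contra! hlt
  have hn : n ≠ 0 := by rintro rfl; exact hc0 (Subsingleton.elim _ _)
  have hzero := eq_zero_of_sum_mul_pow_eq_zero_of_hammingNorm_le (d := δ - 1)
    (x := fun i : Fin n => α ^ (i : ℕ)) (w := fun i => algebraMap F E (c i))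
    (fun i i' h => Fin.ext (hα.pow_inj i.2 i'.2 h)) (fun _ => pow_ne_zero _ (hα.ne_zero hn))
    ((hammingNorm_comp_le_hammingNorm (fun _ => algebraMap F E) fun _ => map_zero _).trans
      (by omega))
    fun j hj1 hjδ => by simpa only [pow_mul] using hc j hj1 hjδ
  exact hc0 <| funext fun i => (algebraMap F E).injective (by simpa using congrFun hzero i)

theorem sum_algebraMap_mul_pow_card_mul (F : Type*) {E ι : Type*} [Field F] [Fintype F]
    [CommRing E] [Algebra F E] [Fintype ι] (c : ι → F) (x : ι → E) (j : ℕ) :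
    ∑ i, algebraMap F E (c i) * x i ^ (Fintype.card F * j) =
      (∑ i, algebraMap F E (c i) * x i ^ j) ^ Fintype.card F := by
  calc ∑ i, algebraMap F E (c i) * x i ^ (Fintype.card F * j)
      = ∑ i, FiniteField.frobeniusAlgHom F E (algebraMap F E (c i) * x i ^ j) := by
        simp only [map_mul, AlgHom.commutes, map_pow, FiniteField.frobeniusAlgHom_apply,
          ← pow_mul, mul_comm]
    _ = _ := (map_sum _ _ _).symm

theorem bchCode_succ_of_card_dvd (F : Type*) {E : Type*} [Field F] [Fintype F] [Field E]
    [Algebra F E] (n : ℕ) (α : E) {δ : ℕ} (hδ : Fintype.card F ∣ δ) :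
    bchCode F n α (δ + 1) = bchCode F n α δ := by
  refine le_antisymm (fun c hc j hj1 hjδ => hc j hj1 (by omega)) fun c hc j hj1 hjδ => ?_
  obtain hlt | rfl : j < δ ∨ j = δ := by omega
  · exact hc j hj1 (by omega)
  obtain ⟨t, rfl⟩ := hδ
  have hq : 1 < Fintype.card F := Fintype.one_lt_card
  have ht : 1 ≤ t := Nat.pos_of_mul_pos_left hj1
  have hct := hc t ht (by have := Nat.mul_le_mul_right t hq; omega)
  simp only [pow_mul α] at hct ⊢
  rw [sum_algebraMap_mul_pow_card_mul, hct, zero_pow Fintype.card_ne_zero]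

theorem bch_minDist_ge_of_dvd_general
    (q m : ℕ)
    (F E : Type*) [Field F] [Fintype F] [DecidableEq F] [Field E]
    [Algebra F E]
    (hF : Fintype.card F = q)
    (α : E) (hα : orderOf α = q ^ m - 1)
    (δ : ℕ) (hdvd : q ∣ δ) :
    ∀ c ∈ bchCode F (q ^ m - 1) α δ, c ≠ 0 → δ + 1 ≤ hammingNorm c := by
  intro c hc hc0
  rw [← bchCode_succ_of_card_dvd F _ α (hF ▸ hdvd)] at hc
  exact le_hammingNorm_of_mem_bchCode (IsPrimitiveRoot.iff_orderOf.mpr hα) hc hc0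

/-- If `δ ≡ 0 (mod q)` and `δ + 1 ≤ q^m - 1`, then the primitive, narrow-sense
BCH code over `F_q` of designed distance `δ` has minimum distance at least
`δ + 1`: every nonzero codeword has Hamming weight `≥ δ + 1`. -/
theorem bch_minDist_ge_of_dvd
    (q m : ℕ) (hq : IsPrimePow q) (hm : 0 < m)
    (F E : Type*) [Field F] [Fintype F] [DecidableEq F] [Field E] [Fintype E]
    [Algebra F E]
    (hF : Fintype.card F = q) (hE : Fintype.card E = q ^ m)
    (α : E) (hα : orderOf α = q ^ m - 1)
    (δ : ℕ) (hdvd : q ∣ δ) (hδn : δ + 1 ≤ q ^ m - 1) :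
    ∀ c ∈ bchCode F (q ^ m - 1) α δ, c ≠ 0 → δ + 1 ≤ hammingNorm c :=
  bch_minDist_ge_of_dvd_general q m F E hF α hα δ hdvd
end

section
/- Let q be a prime power, m ≥ 2 an integer, and n = q^m − 1, and set δ_max = q^{⌈m/2⌉} − 1 − (q−2)·[m is odd]. Let α be a primitive element of F_{q^m}, and for an integer δ with 2 ≤ δ ≤ δ_max let C be the primitive, narrow-sense BCH code of designed distance δ over F_q, i.e. C = {c ∈ F_q^n : Σ_{i=0}^{n−1} c_i α^{ij} = 0 for all 1 ≤ j ≤ δ−1}. Then the minimum distance of the Euclidean dual code C^⊥ is at least δ_max + 1. -/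
open Finset

theorem pow_sub_one_dvd_swap {q m t j k : ℕ} (hq : 0 < q) (ht : t ≤ m)
    (h : q ^ m - 1 ∣ k * q ^ t + j) : q ^ m - 1 ∣ j * q ^ (m - t) + k := by
  have hsplit : (k * q ^ t + j) * q ^ (m - t) = k * (q ^ m - 1) + (j * q ^ (m - t) + k) := by
    rw [add_mul, mul_assoc, ← pow_add, Nat.add_sub_cancel' ht, Nat.mul_sub_one]
    have := Nat.le_mul_of_pos_right k (Nat.one_le_pow m q hq)
    omega
  exact (Nat.dvd_add_right (dvd_mul_left _ k)).mp (hsplit ▸ h.mul_right _)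

theorem not_pow_sub_one_dvd_of_le_half {q m B t j k : ℕ} (hq : 0 < q)
    (hB : B * (q ^ (m / 2) + 1) < q ^ m - 1) (hj : j ≤ B) (hk : k ≤ B) (hjk : j + k ≠ 0)
    (ht : t ≤ m / 2) : ¬ q ^ m - 1 ∣ k * q ^ t + j := by
  intro h
  have hpos : 0 < k * q ^ t + j := by
    rcases Nat.eq_zero_or_pos k with rfl | hk0
    · omega
    · exact Nat.add_pos_left (Nat.mul_pos hk0 (Nat.pow_pos hq)) j
  have hle : k * q ^ t + j ≤ B * (q ^ (m / 2) + 1) := by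
    calc k * q ^ t + j ≤ B * q ^ (m / 2) + B :=
          Nat.add_le_add (Nat.mul_le_mul hk (Nat.pow_le_pow_right hq ht)) hj
      _ = B * (q ^ (m / 2) + 1) := by ring
  exact absurd (Nat.le_of_dvd hpos h) (by omega)

theorem not_pow_sub_one_dvd_mul_pow_add {q m B t j k : ℕ} (hq : 0 < q)
    (hB : B * (q ^ (m / 2) + 1) < q ^ m - 1) (hj : j ≤ B) (hk : k ≤ B) (hjk : j + k ≠ 0)
    (ht : t ≤ m) : ¬ q ^ m - 1 ∣ k * q ^ t + j := by
  -- `q ^ (m - t)` inverts `q ^ t` modulo `q ^ m - 1`, so one of `t`, `m - t` may be used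
  rcases le_or_gt t (m / 2) with hth | hth
  · exact not_pow_sub_one_dvd_of_le_half hq hB hj hk hjk hth
  · exact fun h => not_pow_sub_one_dvd_of_le_half hq hB hk hj (by omega) (by omega)
      (pow_sub_one_dvd_swap hq ht h)

-- The `δ_max` of the statement, with `(m + 1) / 2 = ⌈m / 2⌉`.
def bchDualDistance (q m : ℕ) : ℕ := q ^ ((m + 1) / 2) - 1 - (q - 2) * (if Odd m then 1 else 0)

theorem bchDualDistance_sub_one_mul_lt {q m : ℕ} (hq : 2 ≤ q) (hm : 1 ≤ m) :
    (bchDualDistance q m - 1) * (q ^ (m / 2) + 1) < q ^ m - 1 := by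
  unfold bchDualDistance
  obtain ⟨s, rfl | rfl⟩ := Nat.even_or_odd' m
  · have hA : 2 ≤ q ^ s := le_trans hq (Nat.le_self_pow (by omega) q)
    rw [if_neg (by simp), show (2 * s + 1) / 2 = s by omega, show 2 * s / 2 = s by omega,
      pow_mul', mul_zero, Nat.sub_zero, Nat.sub_sub]
    generalize q ^ s = A at hA ⊢
    zify [hA, show 1 ≤ A ^ 2 by nlinarith]
    nlinarith
  · have hA : 1 ≤ q ^ s := Nat.one_le_pow _ _ (by omega)
    rw [if_pos (by simp), show (2 * s + 1 + 1) / 2 = s + 1 by omega,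
      show (2 * s + 1) / 2 = s by omega, pow_succ, pow_succ, pow_mul', mul_one]
    generalize q ^ s = A at hA ⊢
    have hqA : q ≤ A * q := Nat.le_mul_of_pos_left q hA
    rw [show A * q - 1 - (q - 2) - 1 = A * q - q by omega]
    zify [hqA, show 1 ≤ A ^ 2 * q by nlinarith]
    nlinarith

theorem sum_pow_pow_eq_zero_of_not_dvd {K : Type*} [Field K] {n : ℕ} {α : K}
    (hα : orderOf α = n) {s : ℕ} (hs : ¬ n ∣ s) : ∑ i : Fin n, (α ^ s) ^ (i : ℕ) = 0 := by
  have hne : α ^ s ≠ 1 := fun h => hs (hα ▸ orderOf_dvd_of_pow_eq_one h)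
  have hpow : (α ^ s) ^ n = 1 := by
    rw [← pow_mul, mul_comm, pow_mul, ← hα, pow_orderOf_eq_one, one_pow]
  rw [Fin.sum_univ_eq_sum_range (fun i => (α ^ s) ^ i) n, geom_sum_eq hne, hpow, sub_self,
    zero_div]

section Trace

variable {F E : Type*} [Field F] [Fintype F] [Field E] [Fintype E] [Algebra F E]
  {n δ k : ℕ} {α : E}

theorem trace_mul_pow_mem_bchCode (hα : orderOf α = n)
    (hk : ∀ t < Module.finrank F E, ∀ j, 1 ≤ j → j ≤ δ - 1 → ¬ n ∣ k * Fintype.card F ^ t + j)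
    (β : E) : (fun i : Fin n => Algebra.trace F E (β * (α ^ (i : ℕ)) ^ k)) ∈ bchCode F n α δ := by
  intro j hj1 hj2
  simp_rw [FiniteField.algebraMap_trace_eq_sum_pow, Nat.card_eq_fintype_card, sum_mul]
  rw [sum_comm]
  refine sum_eq_zero fun t ht => ?_
  have hterm (i : Fin n) : (β * (α ^ (i : ℕ)) ^ k) ^ Fintype.card F ^ t * α ^ ((i : ℕ) * j) =
      β ^ Fintype.card F ^ t * (α ^ (k * Fintype.card F ^ t + j)) ^ (i : ℕ) := by
    ring
  rw [sum_congr rfl fun i _ => hterm i, ← mul_sum,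
    sum_pow_pow_eq_zero_of_not_dvd hα (hk t (mem_range.mp ht) j hj1 hj2), mul_zero]

theorem sum_mul_pow_eq_zero_of_mem_dualSet (hα : orderOf α = n)
    (hk : ∀ t < Module.finrank F E, ∀ j, 1 ≤ j → j ≤ δ - 1 → ¬ n ∣ k * Fintype.card F ^ t + j)
    {y : Fin n → F} (hy : y ∈ dualSet (bchCode F n α δ : Set (Fin n → F))) :
    ∑ i, algebraMap F E (y i) * (α ^ (i : ℕ)) ^ k = 0 := by
  by_contra hv
  obtain ⟨β, hβ⟩ : ∃ β, Algebra.trace F E (_ * β) ≠ 0 := by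
    by_contra! h
    exact hv ((traceForm_nondegenerate F E).1 _ h)
  apply hβ
  rw [sum_mul, map_sum, ← hy _ (trace_mul_pow_mem_bchCode hα hk β)]
  refine sum_congr rfl fun i _ => ?_
  rw [mul_assoc, mul_comm _ β, ← Algebra.smul_def, map_smul, smul_eq_mul, mul_comm]

end Trace

theorem eq_zero_of_sum_mul_pow_eq_zero {ι K : Type*} [Fintype ι] [CommRing K] [IsDomain K]
    [DecidableEq K] {x : ι → K} (hx : Function.Injective x) {w : ι → K}
    (hw : ∀ k < hammingNorm w, ∑ i, w i * x i ^ k = 0) : w = 0 := by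
  set S := univ.filter (w · ≠ 0)
  have hS (k : ℕ) : ∑ l : Fin S.card, w (S.equivFin.symm l) * x (S.equivFin.symm l) ^ k =
      ∑ i, w i * x i ^ k := by
    rw [S.equivFin.symm.sum_comp (fun i : S => w i * x i ^ k),
      sum_coe_sort S (fun i => w i * x i ^ k)]
    exact sum_filter_of_ne fun i _ h => left_ne_zero_of_mul h
  have hv := Matrix.eq_zero_of_forall_pow_sum_mul_pow_eq_zero
    (hx.comp (Subtype.val_injective.comp S.equivFin.symm.injective))
    (fun k => (hS k).trans (hw k k.is_lt))
  funext i
  by_contra hi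
  have hiS : i ∈ S := mem_filter.mpr ⟨mem_univ i, hi⟩
  exact hi (by simpa using congrFun hv (S.equivFin ⟨i, hiS⟩))

theorem bch_euclidean_dual_distance_general
    (q m : ℕ) (hm : 2 ≤ m)
    (F E : Type*) [Field F] [Fintype F] [DecidableEq F] [Field E] [Fintype E]
    [Algebra F E]
    (hF : Fintype.card F = q) (hE : Fintype.card E = q ^ m)
    (α : E) (hα : orderOf α = q ^ m - 1)
    (δ : ℕ)
    (hδ2 : δ ≤ q ^ ((m + 1) / 2) - 1 - (q - 2) * (if Odd m then 1 else 0)) :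
    ∀ y ∈ dualSet (bchCode F (q ^ m - 1) α δ : Set (Fin (q ^ m - 1) → F)),
      y ≠ 0 →
        q ^ ((m + 1) / 2) - 1 - (q - 2) * (if Odd m then 1 else 0) + 1 ≤
          hammingNorm y := by
  classical
  change δ ≤ bchDualDistance q m at hδ2
  change ∀ y ∈ _, y ≠ 0 → bchDualDistance q m + 1 ≤ hammingNorm y
  intro y hy hy0
  have hq : 2 ≤ q := hF ▸ Fintype.one_lt_card
  have hrank : Module.finrank F E = m :=
    Nat.pow_right_injective hq <| show q ^ Module.finrank F E = q ^ m by
      rw [← hE, Module.card_eq_pow_finrank (K := F), hF]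
  have hsyndrome (k : ℕ) (hk : k < bchDualDistance q m) :
      ∑ i, algebraMap F E (y i) * (α ^ (i : ℕ)) ^ k = 0 := by
    refine sum_mul_pow_eq_zero_of_mem_dualSet hα (fun t ht j hj1 hj2 => ?_) hy
    rw [hF]
    exact not_pow_sub_one_dvd_mul_pow_add (by omega)
      (bchDualDistance_sub_one_mul_lt hq (by omega)) (by omega) (by omega) (by omega) (by omega)
  have hinj : Function.Injective fun i : Fin (q ^ m - 1) => α ^ (i : ℕ) := fun i j h =>
    Fin.ext (pow_injOn_Iio_orderOf (by simp [hα]) (by simp [hα]) h)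
  by_contra! hweight
  have hzero := eq_zero_of_sum_mul_pow_eq_zero hinj (w := fun i => algebraMap F E (y i))
    (fun k hk => hsyndrome k (by
      rw [hammingNorm_comp (fun _ => algebraMap F E) (fun _ => (algebraMap F E).injective)
        (fun _ => map_zero _)] at hk
      omega))
  exact hy0 (funext fun i => (algebraMap F E).injective (by simpa using congrFun hzero i))

/-- For a primitive, narrow-sense BCH code over `F_q` of length `q^m - 1`,
`m ≥ 2`, with designed distance `2 ≤ δ ≤ δ_max = q^⌈m/2⌉ - 1 - (q-2)·[m odd]`,
the Euclidean dual code has minimum distance at least `δ_max + 1`. -/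
theorem bch_euclidean_dual_distance
    (q m : ℕ) (hq : IsPrimePow q) (hm : 2 ≤ m)
    (F E : Type*) [Field F] [Fintype F] [DecidableEq F] [Field E] [Fintype E]
    [Algebra F E]
    (hF : Fintype.card F = q) (hE : Fintype.card E = q ^ m)
    (α : E) (hα : orderOf α = q ^ m - 1)
    (δ : ℕ) (hδ1 : 2 ≤ δ)
    (hδ2 : δ ≤ q ^ ((m + 1) / 2) - 1 - (q - 2) * (if Odd m then 1 else 0)) :
    ∀ y ∈ dualSet (bchCode F (q ^ m - 1) α δ : Set (Fin (q ^ m - 1) → F)),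
      y ≠ 0 →
        q ^ ((m + 1) / 2) - 1 - (q - 2) * (if Odd m then 1 else 0) + 1 ≤
          hammingNorm y :=
  bch_euclidean_dual_distance_general q m hm F E hF hE α hα δ hδ2
end

section
/- Let q be a prime power, m a positive integer with m ≠ 2, and n = q^{2m} − 1, and set δ_max = q^{m + [m is even]} − 1 − (q^2 − 2)·[m is even]. Let α be a primitive element of F_{q^{2m}}, and for an integer δ with 2 ≤ δ ≤ δ_max let C be the primitive, narrow-sense BCH code of designed distance δ over F_{q^2}, i.e. C = {c ∈ F_{q^2}^n : Σ_{i=0}^{n−1} c_i α^{ij} = 0 for all 1 ≤ j ≤ δ−1}. Then the minimum distance of the Hermitian dual code C^{⊥h} is at least δ_max + 1. -/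
/-- Hermitian dual (with respect to exponent `q`) of a set of codewords
over `F_{q^2}`. -/
def hermDualSet {K : Type*} [Field K] (q : ℕ) {n : ℕ} (C : Set (Fin n → K)) :
    Set (Fin n → K) :=
  {y | ∀ x ∈ C, ∑ i, (y i) ^ q * x i = 0}

def deltaMax (q m : ℕ) : ℕ :=
  q ^ (m + (if Even m then 1 else 0)) - 1 - (q ^ 2 - 2) * (if Even m then 1 else 0)

lemma deltaMax_add_sq_of_even {q m : ℕ} (hq : 2 ≤ q) (hm0 : 0 < m) (hm : Even m) :
    deltaMax q m + q ^ 2 = q ^ (m + 1) + 1 := by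
  have : q ^ 2 ≤ q ^ (m + 1) := Nat.pow_le_pow_right (by omega) (by omega)
  have : 4 ≤ q ^ 2 := by nlinarith
  simp only [deltaMax, hm, if_true, mul_one]
  omega

lemma deltaMax_of_not_even {q m : ℕ} (hm : ¬ Even m) : deltaMax q m = q ^ m - 1 := by
  simp [deltaMax, hm]

lemma mul_pow_add_lt_of_lt_deltaMax {q m a b i : ℕ} (hq : 2 ≤ q) (hi : Odd i) (him : i ≤ m)
    (ha : a < deltaMax q m) (hb : b < deltaMax q m) : a * q ^ i + b < q ^ (2 * m) - 1 := by
  rw [Nat.lt_sub_iff_add_lt]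
  by_cases hm : Even m
  · have hm1 : i ≤ m - 1 := by grind
    have hP1 : q ^ (m + 1) = q ^ (m - 1) * q ^ 2 := by rw [← pow_add]; grind
    have hP2 : q ^ (2 * m) = q ^ (m - 1) * q ^ (m - 1) * q ^ 2 := by
      rw [mul_assoc, ← hP1, ← pow_add]; grind
    have hD := deltaMax_add_sq_of_even hq (by grind) hm
    have hPi : q ^ i ≤ q ^ (m - 1) := Nat.pow_le_pow_right (by omega) hm1
    rw [hP1] at hD
    rw [hP2]
    set P := q ^ (m - 1)
    have ha' : (a + q ^ 2) * P ≤ P * q ^ 2 * P := Nat.mul_le_mul_right P (by omega)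
    have := Nat.mul_le_mul_left a hPi
    nlinarith
  · have hQi : q ^ i ≤ q ^ m := Nat.pow_le_pow_right (by omega) him
    have hQ : 2 ≤ q ^ m := le_trans hq (Nat.le_self_pow (by grind) q)
    rw [deltaMax_of_not_even hm] at ha hb
    rw [two_mul, pow_add]
    set Q := q ^ m
    have ha' : (a + 2) * Q ≤ Q * Q := Nat.mul_le_mul_right Q (by omega)
    have hb' : b + 2 ≤ Q := by omega
    have := Nat.mul_le_mul_left a hQi
    nlinarith

lemma dvd_mul_pow_sub_add_of_dvd_s11 {q n a b i : ℕ} (hq : 0 < q) (hi : i ≤ n)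
    (h : q ^ n - 1 ∣ a * q ^ i + b) : q ^ n - 1 ∣ b * q ^ (n - i) + a := by
  obtain ⟨N, hN⟩ : ∃ N, q ^ n = N + 1 := 
    ⟨q ^ n - 1, (Nat.sub_add_cancel (Nat.one_le_pow n q hq)).symm⟩
  have hpow : q ^ i * q ^ (n - i) = N + 1 := by rw [← pow_add, ← hN]; congr 1; omega
  rw [hN, Nat.add_sub_cancel] at h ⊢
  have key : (a * q ^ i + b) * q ^ (n - i) = a * N + (b * q ^ (n - i) + a) := by
    linear_combination a * hpow
  exact (Nat.dvd_add_right (dvd_mul_left _ a)).mp (key ▸ h.mul_right _)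

lemma not_dvd_mul_pow_add {q m k j i : ℕ} (hq : 2 ≤ q) (hi : Odd i) (him : i < 2 * m)
    (hk : k < deltaMax q m) (hj0 : 0 < j) (hj : j < deltaMax q m) :
    ¬ q ^ (2 * m) - 1 ∣ k * q ^ i + j := by
  intro h
  rcases le_or_gt i m with him' | him'
  · exact Nat.not_dvd_of_pos_of_lt (by omega) (mul_pow_add_lt_of_lt_deltaMax hq hi him' hk hj) h
  · have h' := dvd_mul_pow_sub_add_of_dvd_s11 (by omega) him.le h
    have hi' : Odd (2 * m - i) := by grind
    exact Nat.not_dvd_of_pos_of_lt (by positivity)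
      (mul_pow_add_lt_of_lt_deltaMax hq hi' (by omega) hj hk) h'

lemma sum_pow_mul_eq_zero_of_not_dvd {E : Type*} [Field E] {α : E} {n t : ℕ}
    (hα : orderOf α = n) (ht : ¬ n ∣ t) : ∑ i : Fin n, α ^ ((i : ℕ) * t) = 0 := by
  have h1 : α ^ t ≠ 1 := fun h => ht (hα ▸ orderOf_dvd_of_pow_eq_one h)
  have hn : (α ^ t) ^ n = 1 := by
    rw [← pow_mul, mul_comm, pow_mul, ← hα, pow_orderOf_eq_one, one_pow]
  simp_rw [mul_comm _ t, pow_mul]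
  rw [Fin.sum_univ_eq_sum_range (fun i => (α ^ t) ^ i), geom_sum_eq h1, hn, sub_self, zero_div]

section Trace

variable {F E : Type*} [Field F] [Field E] [Algebra F E]

lemma sum_algebraMap_mul_eq_zero_of_forall_trace [FiniteDimensional F E]
    [Algebra.IsSeparable F E] {ι : Type*} [Fintype ι] (a : ι → F) (b : ι → E)
    (h : ∀ γ : E, ∑ i, a i * Algebra.trace F E (γ * b i) = 0) :
    ∑ i, algebraMap F E (a i) * b i = 0 := by
  refine (traceForm_nondegenerate F E).1 _ fun γ => ?_
  rw [Algebra.traceForm_apply, Finset.sum_mul, map_sum, ← h γ]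
  refine Finset.sum_congr rfl fun i _ => ?_
  rw [mul_assoc, mul_comm (b i), ← Algebra.smul_def, map_smul, smul_eq_mul]

lemma trace_mem_bchCode [Fintype F] [Finite E] {n : ℕ} {α : E} (hα : orderOf α = n)
    (γ : E) (e δ : ℕ)
    (h : ∀ s < Module.finrank F E, ∀ j, 1 ≤ j → j ≤ δ - 1 →
      ¬ n ∣ e * Fintype.card F ^ s + j) :
    (fun i : Fin n => Algebra.trace F E (γ * α ^ ((i : ℕ) * e))) ∈ bchCode F n α δ := by
  intro j hj1 hj2
  simp_rw [FiniteField.algebraMap_trace_eq_sum_pow, Nat.card_eq_fintype_card, Finset.sum_mul]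
  rw [Finset.sum_comm]
  refine Finset.sum_eq_zero fun s hs => ?_
  calc ∑ i : Fin n, (γ * α ^ ((i : ℕ) * e)) ^ Fintype.card F ^ s * α ^ ((i : ℕ) * j)
      = γ ^ Fintype.card F ^ s *
          ∑ i : Fin n, α ^ ((i : ℕ) * (e * Fintype.card F ^ s + j)) := by
        rw [Finset.mul_sum]
        refine Finset.sum_congr rfl fun i _ => ?_
        rw [mul_pow, mul_assoc, ← pow_mul, ← pow_add]
        ring_nf
    _ = 0 := by
      rw [sum_pow_mul_eq_zero_of_not_dvd hα (h s (Finset.mem_range.mp hs) j hj1 hj2), mul_zero]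

end Trace

lemma lt_hammingNorm_of_sum_mul_pow_eq_zero {E ι : Type*} [Field E] [DecidableEq E] [Fintype ι]
    {v : ι → E} (hv : Function.Injective v) {c : ι → E} (hc : c ≠ 0) {w : ℕ}
    (h : ∀ k < w, ∑ i, c i * v i ^ k = 0) : w < hammingNorm c := by
  by_contra! hw
  set s := Finset.univ.filter fun i => c i ≠ 0
  set e := s.equivFin.symm
  have hce : (fun j => c (e j)) = 0 := by
    refine Matrix.eq_zero_of_forall_pow_sum_mul_pow_eq_zero
      (hv.comp (Subtype.val_injective.comp e.injective)) fun k => ?_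
    calc ∑ j, c (e j) * v (e j) ^ (k : ℕ) = ∑ i ∈ s, c i * v i ^ (k : ℕ) :=
          (e.sum_comp fun i : s => c i * v i ^ (k : ℕ)).trans
            (s.sum_coe_sort fun i => c i * v i ^ (k : ℕ))
      _ = ∑ i, c i * v i ^ (k : ℕ) :=
          Finset.sum_filter_of_ne fun i _ hi => left_ne_zero_of_mul hi
      _ = 0 := h k (k.2.trans_le hw)
  refine hc (hammingNorm_eq_zero.mp (Finset.card_eq_zero.mpr (Finset.eq_empty_of_forall_notMem
    fun i hi => (Finset.mem_filter.mp hi).2 ?_)))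
  simpa [e] using congrFun hce (e.symm ⟨i, hi⟩)

theorem sum_algebraMap_mul_pow_eq_zero_of_mem_hermDualSet {q m : ℕ} (hq : IsPrimePow q)
    {F E : Type*} [Field F] [Fintype F] [Field E] [Fintype E] [Algebra F E]
    (hF : Fintype.card F = q ^ 2) (hE : Fintype.card E = q ^ (2 * m))
    {α : E} (hα : orderOf α = q ^ (2 * m) - 1) {δ : ℕ} (hδ : δ ≤ deltaMax q m)
    {y : Fin (q ^ (2 * m) - 1) → F}
    (hy : y ∈ hermDualSet q
      (bchCode F (q ^ (2 * m) - 1) α δ : Set (Fin (q ^ (2 * m) - 1) → F)))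
    {k : ℕ} (hk : k < deltaMax q m) :
    ∑ i, algebraMap F E (y i) * α ^ ((i : ℕ) * k) = 0 := by
  have hq2 : 2 ≤ q := hq.two_le
  obtain ⟨p, e, hp, -, hpe⟩ := hq
  have : Fact p.Prime := ⟨Nat.prime_iff.mpr hp⟩
  have : CharP E p := charP_of_card_eq_prime_pow (p := p) (hE.trans (by rw [← hpe, ← pow_mul]))
  have hfinrank : Module.finrank F E = m := by
    have h := (Module.card_eq_pow_finrank (K := F) (V := E)).symm.trans hE
    rw [hF, ← pow_mul] at h
    have := Nat.pow_right_injective hq2 h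
    omega
  have hsyndrome : ∑ i, algebraMap F E (y i ^ q) * α ^ ((i : ℕ) * (k * q)) = 0 := by
    refine sum_algebraMap_mul_eq_zero_of_forall_trace _ _ fun γ =>
      hy _ (trace_mem_bchCode hα γ _ δ fun s hs j hj1 hj2 => ?_)
    rw [hF, ← pow_mul, mul_assoc, ← pow_succ']
    exact not_dvd_mul_pow_add hq2 (odd_two_mul_add_one s) (by omega) hk hj1 (by omega)
  have hfrob := sum_pow_char_pow p e Finset.univ fun i : Fin (q ^ (2 * m) - 1) =>
    algebraMap F E (y i) * α ^ ((i : ℕ) * k)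
  rw [hpe] at hfrob
  rw [← pow_eq_zero_iff (n := q) (by omega), hfrob, ← hsyndrome]
  refine Finset.sum_congr rfl fun i _ => ?_
  rw [mul_pow, map_pow, ← pow_mul, mul_assoc]

theorem bch_hermitian_dual_distance_general
    (q m : ℕ) (hq : IsPrimePow q)
    (F E : Type*) [Field F] [Fintype F] [DecidableEq F] [Field E] [Fintype E]
    [Algebra F E]
    (hF : Fintype.card F = q ^ 2) (hE : Fintype.card E = q ^ (2 * m))
    (α : E) (hα : orderOf α = q ^ (2 * m) - 1)
    (δ : ℕ)
    (hδ2 : δ ≤ q ^ (m + (if Even m then 1 else 0)) - 1 -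
      (q ^ 2 - 2) * (if Even m then 1 else 0)) :
    ∀ y ∈ hermDualSet q
        (bchCode F (q ^ (2 * m) - 1) α δ : Set (Fin (q ^ (2 * m) - 1) → F)),
      y ≠ 0 →
        q ^ (m + (if Even m then 1 else 0)) - 1 -
            (q ^ 2 - 2) * (if Even m then 1 else 0) + 1 ≤ hammingNorm y := by
  classical
  intro y hy hy0
  have hinj : Function.Injective fun i : Fin (q ^ (2 * m) - 1) => α ^ (i : ℕ) :=
    fun i j hij => Fin.ext (pow_injOn_Iio_orderOf (by simp [hα]) (by simp [hα]) hij)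
  have hy0' : (fun i => algebraMap F E (y i)) ≠ 0 := by
    contrapose! hy0
    ext i
    simpa using congrFun hy0 i
  have hbound := lt_hammingNorm_of_sum_mul_pow_eq_zero hinj hy0' (w := deltaMax q m) fun k hk => by
    simpa only [← pow_mul] using
      sum_algebraMap_mul_pow_eq_zero_of_mem_hermDualSet hq hF hE hα hδ2 hy hk
  rwa [hammingNorm_comp _ (fun _ => (algebraMap F E).injective) fun _ => map_zero _] at hbound

/-- For a primitive, narrow-sense BCH code over `F_{q^2}` of length
`q^{2m} - 1`, `m ≠ 2`, with designed distance
`2 ≤ δ ≤ δ_max = q^{m + [m even]} - 1 - (q^2-2)·[m even]`, the Hermitian dual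
code has minimum distance at least `δ_max + 1`. -/
theorem bch_hermitian_dual_distance
    (q m : ℕ) (hq : IsPrimePow q) (hm : 0 < m) (hm2 : m ≠ 2)
    (F E : Type*) [Field F] [Fintype F] [DecidableEq F] [Field E] [Fintype E]
    [Algebra F E]
    (hF : Fintype.card F = q ^ 2) (hE : Fintype.card E = q ^ (2 * m))
    (α : E) (hα : orderOf α = q ^ (2 * m) - 1)
    (δ : ℕ) (hδ1 : 2 ≤ δ)
    (hδ2 : δ ≤ q ^ (m + (if Even m then 1 else 0)) - 1 -
      (q ^ 2 - 2) * (if Even m then 1 else 0)) :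
    ∀ y ∈ hermDualSet q
        (bchCode F (q ^ (2 * m) - 1) α δ : Set (Fin (q ^ (2 * m) - 1) → F)),
      y ≠ 0 →
        q ^ (m + (if Even m then 1 else 0)) - 1 -
            (q ^ 2 - 2) * (if Even m then 1 else 0) + 1 ≤ hammingNorm y :=
  bch_hermitian_dual_distance_general q m hq F E hF hE α hα δ hδ2
end

section
/- Let q be a prime power, m a positive integer, n = q^{2m} − 1, and δ_max = q^{m + [m is even]} − 1 − (q^2 − 2)·[m is even]. For every integer x with 1 ≤ x < δ_max, every element of the q^2-ary cyclotomic coset of qx modulo n, namely {q x q^{2j} mod n : j ≥ 0}, is at most n − δ_max. -/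
/-- Base-`q` rotation of an `(e + f)`-digit string: the low `f` digits move up by `e` places and
the high `e` digits move down to the bottom. -/
def digitRotate (q e f x : ℕ) : ℕ := x / q ^ f + x % q ^ f * q ^ e

theorem add_pow_le_pow_of_lt {q x c e : ℕ} (hq : 2 ≤ q) (hx : x < q ^ c) (hce : c < e) :
    x + q ^ c ≤ q ^ e :=
  calc x + q ^ c ≤ q * q ^ c := by nlinarith
    _ = q ^ (c + 1) := (pow_succ' q c).symm
    _ ≤ q ^ e := Nat.pow_le_pow_right (by omega) hce

theorem mul_mod_mul_sub_one {A B x : ℕ} (hx : x + 2 ≤ A * B) :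
    x * A % (A * B - 1) = x / B + x % B * A := by
  have hB : 0 < B := Nat.pos_of_ne_zero (by rintro rfl; simp at hx)
  have hdiv : x / B < A := (Nat.div_lt_iff_lt_mul hB).mpr (by omega)
  have hmod : x % B < B := Nat.mod_lt _ hB
  have hsplit : x / B * B + x % B = x := Nat.div_add_mod' x B
  have hlt : x / B + x % B * A + 2 ≤ A * B := by
    generalize x / B = u at *
    generalize x % B = v at *
    subst hsplit
    by_cases htop : v + 1 = B
    · -- the high digit `u` cannot be `A - 1`, else `x ≥ A * B - 1`
      have : (u + 1) * B < A * B := by nlinarith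
      have : u + 1 < A := Nat.lt_of_mul_lt_mul_right this
      subst htop; nlinarith
    · nlinarith [Nat.mul_le_mul_left A (show v + 2 ≤ B by omega)]
  have hid : x * A = (A * B - 1) * (x / B) + (x / B + x % B * A) := by
    zify [show 1 ≤ A * B by omega]
    nlinarith [hsplit]
  rw [hid, Nat.mul_add_mod, Nat.mod_eq_of_lt (by omega)]

theorem mul_pow_mod_pow_add_sub_one {q e f x : ℕ} (hx : x < q ^ (e + f) - 1) :
    x * q ^ e % (q ^ (e + f) - 1) = digitRotate q e f x := by
  rw [pow_add] at hx ⊢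
  exact mul_mod_mul_sub_one (by omega)

theorem mul_pow_modEq_mul_pow_mod {q : ℕ} (hq : 0 < q) (x k N : ℕ) :
    x * q ^ k ≡ x * q ^ (k % N) [MOD q ^ N - 1] := by
  have hone : q ^ N ≡ 1 [MOD q ^ N - 1] := Nat.modEq_sub (Nat.one_le_pow _ _ hq)
  calc x * q ^ k = x * ((q ^ N) ^ (k / N) * q ^ (k % N)) := by
        rw [← pow_mul, ← pow_add, Nat.div_add_mod]
    _ ≡ x * (1 ^ (k / N) * q ^ (k % N)) [MOD q ^ N - 1] :=
        (((hone.pow _).mul_right _).mul_left _)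
    _ = x * q ^ (k % N) := by rw [one_pow, one_mul]

theorem two_mul_add_one_mod_two_mul_ne {m : ℕ} (hm : Even m) (k : ℕ) :
    (2 * k + 1) % (2 * m) ≠ m := by
  have := Nat.mod_mod_of_dvd (2 * k + 1) (dvd_mul_right 2 m)
  rcases hm with ⟨r, rfl⟩
  omega

section digitRotate

variable {q e f m x : ℕ}

theorem digitRotate_of_lt (hx : x < q ^ f) : digitRotate q e f x = x * q ^ e := by
  rw [digitRotate, Nat.div_eq_of_lt hx, Nat.mod_eq_of_lt hx, zero_add]

theorem digitRotate_add_pow_le (hq : 0 < q) (c : ℕ) (hx : x + q ^ c ≤ q ^ e) :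
    digitRotate q e f x + q ^ c ≤ q ^ (e + f) := by
  have hmod : (x % q ^ f + 1) * q ^ e ≤ q ^ f * q ^ e :=
    Nat.mul_le_mul_right _ (Nat.mod_lt _ (Nat.pow_pos hq))
  have hdiv : x / q ^ f ≤ x := Nat.div_le_self _ _
  rw [digitRotate, pow_add]
  nlinarith

theorem digitRotate_add_pow_le_of_le (hq : 0 < q) {a c d : ℕ} (hx : x + q ^ c ≤ q ^ a)
    (haf : a ≤ f) (hed : e ≤ d) :
    digitRotate q e f x + q ^ (c + d) ≤ q ^ (a + d) := by
  have hxf : x < q ^ f :=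
    lt_of_lt_of_le (by have := Nat.pow_pos (n := c) hq; omega) (Nat.pow_le_pow_right hq haf)
  rw [digitRotate_of_lt hxf, pow_add, pow_add]
  have : x * q ^ e ≤ x * q ^ d := Nat.mul_le_mul_left x (Nat.pow_le_pow_right hq hed)
  nlinarith [Nat.mul_le_mul_right (q ^ d) hx]

theorem digitRotate_add_pow_add_two_le (hq : 2 ≤ q) (hx : x + q ^ 2 ≤ q ^ (f + 2)) :
    digitRotate q (f + 2) f x + q ^ (f + 2) + 2 ≤ q ^ (f + 2 + f) + q ^ 2 := by
  have hB : 0 < q ^ f := Nat.pow_pos (by omega)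
  have hq2 : 4 ≤ q ^ 2 := by nlinarith
  have hmod : x % q ^ f < q ^ f := Nat.mod_lt _ hB
  have hsplit : x / q ^ f * q ^ f + x % q ^ f = x := Nat.div_add_mod' x (q ^ f)
  rw [digitRotate, pow_add q (f + 2) f, pow_add q f 2] at *
  generalize q ^ 2 = Q at *
  generalize q ^ f = B at *
  generalize x / B = u at *
  generalize x % B = v at *
  subst hsplit
  have hu : u < Q := Nat.lt_of_mul_lt_mul_right (by nlinarith : u * B < Q * B)
  by_cases htop : v + 1 = B
  · -- `x = (u + 1) B - 1` together with `x + Q ≤ Q B` forces `u + 2 ≤ Q`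
    have : u + 1 < Q := Nat.lt_of_mul_lt_mul_right (by subst htop; nlinarith : (u + 1) * B < Q * B)
    subst htop; nlinarith
  · nlinarith [Nat.mul_le_mul_left (B * Q) (show v + 2 ≤ B by omega)]

theorem digitRotate_add_pow_le_pow_two_mul (hq : 2 ≤ q) (h : e + f = 2 * m) (hx : x < q ^ m) :
    digitRotate q e f x + q ^ m ≤ q ^ (2 * m) := by
  rcases le_or_gt e m with hem | hem
  · simpa [two_mul] using
      digitRotate_add_pow_le_of_le (c := 0) (by omega) (by simpa using hx) (by omega) hem
  · simpa [h] using digitRotate_add_pow_le (f := f) (by omega) m (add_pow_le_pow_of_lt hq hx hem)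

theorem digitRotate_add_pow_succ_add_two_le (hq : 2 ≤ q) (h : e + f = 2 * m) (hem : e ≠ m)
    (hx : x + q ^ 2 ≤ q ^ (m + 1)) :
    digitRotate q e f x + q ^ (m + 1) + 2 ≤ q ^ (2 * m) + q ^ 2 := by
  have hq2 : 2 ≤ q ^ 2 := by nlinarith
  rcases lt_trichotomy e (m + 1) with hlt | rfl | hgt
  · have := digitRotate_add_pow_le_of_le (e := e) (f := f) (c := 2) (d := m - 1) (by omega) hx
      (by omega) (by omega)
    rw [show 2 + (m - 1) = m + 1 by omega, show m + 1 + (m - 1) = 2 * m by omega] at this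
    omega
  · obtain rfl : m = f + 1 := by omega
    simpa [h, add_assoc] using digitRotate_add_pow_add_two_le hq hx
  · have := digitRotate_add_pow_le (e := e) (f := f) (x := x) (by omega) (m + 1)
      (add_pow_le_pow_of_lt (c := m + 1) hq (by omega) hgt)
    rw [h] at this
    omega

end digitRotate

theorem cycCoset_qx_max_general
    (q m : ℕ) (hq : IsPrimePow q) (hm : 0 < m)
    (x : ℕ)
    (hx2 : x < q ^ (m + (if Even m then 1 else 0)) - 1 -
      (q ^ 2 - 2) * (if Even m then 1 else 0)) :
    ∀ y ∈ cycCoset (q ^ 2) (q ^ (2 * m) - 1) (q * x),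
      y ≤ (q ^ (2 * m) - 1) -
        (q ^ (m + (if Even m then 1 else 0)) - 1 -
          (q ^ 2 - 2) * (if Even m then 1 else 0)) := by
  rintro y ⟨k, rfl⟩
  have hq2 : 2 ≤ q := hq.two_le
  set e := (2 * k + 1) % (2 * m)
  have he : e + (2 * m - e) = 2 * m := Nat.add_sub_cancel' (Nat.mod_lt _ (by omega)).le
  have hrot (hx : x < q ^ (2 * m) - 1) :
      q * x * (q ^ 2) ^ k % (q ^ (2 * m) - 1) = digitRotate q e (2 * m - e) x := by
    rw [show q * x * (q ^ 2) ^ k = x * q ^ (2 * k + 1) by ring,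
      mul_pow_modEq_mul_pow_mod (by omega) x (2 * k + 1) (2 * m)]
    rw [← he] at hx
    simpa only [he] using mul_pow_mod_pow_add_sub_one hx
  split_ifs at hx2 ⊢ with hme <;> simp only [mul_one, add_zero, mul_zero, Nat.sub_zero] at hx2 ⊢
  · have hne : e ≠ m := two_mul_add_one_mod_two_mul_ne hme k
    have hq2sq : 2 ≤ q ^ 2 := by nlinarith
    have hx : x + q ^ 2 ≤ q ^ (m + 1) := by omega
    have hmono : q ^ (m + 1) ≤ q ^ (2 * m) := Nat.pow_le_pow_right (by omega) (by omega)
    have := digitRotate_add_pow_succ_add_two_le hq2 he hne hx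
    rw [hrot (by omega)]
    omega
  · have hmono : q ^ m ≤ q ^ (2 * m) := Nat.pow_le_pow_right (by omega) (by omega)
    have := digitRotate_add_pow_le_pow_two_mul hq2 he (by omega : x < q ^ m)
    rw [hrot (by omega)]
    omega

/-- For `n = q^{2m} - 1` and `δ_max = q^{m + [m even]} - 1 - (q^2-2)·[m even]`:
for every `1 ≤ x < δ_max`, every element of the `q^2`-ary cyclotomic coset of
`q·x` modulo `n` is at most `n - δ_max`. -/
theorem cycCoset_qx_max
    (q m : ℕ) (hq : IsPrimePow q) (hm : 0 < m)
    (x : ℕ) (hx1 : 1 ≤ x)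
    (hx2 : x < q ^ (m + (if Even m then 1 else 0)) - 1 -
      (q ^ 2 - 2) * (if Even m then 1 else 0)) :
    ∀ y ∈ cycCoset (q ^ 2) (q ^ (2 * m) - 1) (q * x),
      y ≤ (q ^ (2 * m) - 1) -
        (q ^ (m + (if Even m then 1 else 0)) - 1 -
          (q ^ 2 - 2) * (if Even m then 1 else 0)) :=
  cycCoset_qx_max_general q m hq hm x hx2
end
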